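/- arXiv:2102.03541 — 9 statements merged into one kernel-verified Lean document; each statement's English description precedes it below -/
import Mathlib

section
/- Let 0 < μ < 1, let K ⊂ ℝ^d be a convex body symmetric about the origin, and let F = {x_i + λ_i K : i = 1, 2, …} be a generalized Minkowski arrangement of order μ (i.e., for any two distinct members, neither overlaps the μ-core of the other), with positive homogeneity, i.e., there are constants 0 < C₁ < C₂ with C₁ ≤ λ_i ≤ C₂ for all i. Then the upper density δ(F) = limsup_{R→∞} (Σ_{x_i ∈ R·B^d} vol_d(x_i + λ_i K)) / vol_d(R·B^d) satisfies δ(F) ≤ 2^d/(1+μ)^d. -/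
open MeasureTheory Metric Filter Pointwise
open scoped ENNReal

set_option maxHeartbeats 1000000 in
/-- The upper density of a generalized Minkowski arrangement of order `μ`
of homothets of an origin-symmetric convex body `K` with positive homogeneity is at most
`2^d / (1+μ)^d`. -/
theorem stmt_0 (d : ℕ) (hd : 0 < d) (μ : ℝ) (hμ0 : 0 < μ) (hμ1 : μ < 1)
    (K : Set (EuclideanSpace ℝ (Fin d))) (hKconv : Convex ℝ K) (hKcomp : IsCompact K)
    (hKint : (interior K).Nonempty) (hKsym : ∀ v ∈ K, -v ∈ K)
    (x : ℕ → EuclideanSpace ℝ (Fin d)) (lam : ℕ → ℝ)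
    (C₁ C₂ : ℝ) (hC₁ : 0 < C₁) (hC₁₂ : C₁ < C₂)
    (hlam : ∀ i, C₁ ≤ lam i ∧ lam i ≤ C₂)
    (harr : ∀ i j, i ≠ j →
      max (lam i + μ * lam j) (lam j + μ * lam i) ≤ gauge K (x i - x j)) :
    Filter.limsup (fun R : ℝ =>
      (∑' i : ℕ, if ‖x i‖ ≤ R then volume (x i +ᵥ lam i • K) else 0) /
        volume (closedBall (0 : EuclideanSpace ℝ (Fin d)) R)) Filter.atTop
      ≤ ENNReal.ofReal (2 ^ d / (1 + μ) ^ d) := by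
  classical
  -- basic positivity facts
  have hμ1' : (0:ℝ) < 1 + μ := by linarith
  have hlam_pos : ∀ i, 0 < lam i := fun i => lt_of_lt_of_le hC₁ (hlam i).1
  -- 0 ∈ interior K
  obtain ⟨y, hy⟩ := hKint
  have hyneg : -y ∈ interior K := by
    have hopen : IsOpen (-(interior K)) := isOpen_interior.neg
    have hsub : -(interior K) ⊆ K := by
      intro z hz
      have : -z ∈ K := interior_subset (Set.mem_neg.1 hz)
      simpa using hKsym _ this
    exact interior_maximal hsub hopen (Set.neg_mem_neg.2 hy)
  have h0int : (0 : EuclideanSpace ℝ (Fin d)) ∈ interior K := by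
    have h := hKconv.interior hy hyneg (by norm_num : (0:ℝ) ≤ 1/2)
      (by norm_num : (0:ℝ) ≤ 1/2) (by norm_num)
    simpa [smul_neg] using h
  have habs : Absorbent ℝ K := absorbent_nhds_zero (mem_interior_iff_mem_nhds.1 h0int)
  have htri : ∀ a b : EuclideanSpace ℝ (Fin d),
      gauge K (a + b) ≤ gauge K a + gauge K b := gauge_add_le hKconv habs
  have hgsym : ∀ v : EuclideanSpace ℝ (Fin d), gauge K (-v) = gauge K v := gauge_neg hKsym
  -- bound on K
  obtain ⟨M₀, hM₀⟩ := hKcomp.isBounded.subset_closedBall 0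
  set M : ℝ := max M₀ 0 with hM
  have hM0 : 0 ≤ M := le_max_right _ _
  have hKM : K ⊆ closedBall 0 M := hM₀.trans (closedBall_subset_closedBall (le_max_left _ _))
  -- the shrunk radii
  set r : ℕ → ℝ := fun i => (1 + μ) / 2 * lam i with hrdef
  have hr_pos : ∀ i, 0 < r i := fun i => by
    have := hlam_pos i; simp only [hrdef]; positivity
  have hr_le : ∀ i, r i ≤ C₂ := fun i => by
    simp only [hrdef]; nlinarith [hlam_pos i, (hlam i).2, hμ1]
  -- membership gauge bounds
  have hmem_gauge : ∀ i (z : EuclideanSpace ℝ (Fin d)),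
      z ∈ x i +ᵥ r i • K → gauge K (z - x i) ≤ r i := by
    intro i z hz
    rw [Set.mem_vadd_set] at hz
    obtain ⟨b, hb, hbz⟩ := hz
    obtain ⟨w, hw, rfl⟩ := hb
    have : z - x i = r i • w := by
      rw [← hbz]; simp [vadd_eq_add]
    rw [this, gauge_smul_of_nonneg (hr_pos i).le]
    have := gauge_le_one_of_mem hw
    calc r i • gauge K w ≤ r i • 1 :=
          smul_le_smul_of_nonneg_left this (hr_pos i).le
      _ = r i := by simp
  have hint_gauge : ∀ i (z : EuclideanSpace ℝ (Fin d)),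
      z ∈ interior (x i +ᵥ r i • K) → gauge K (z - x i) < r i := by
    intro i z hz
    rw [interior_vadd, interior_smul₀ (hr_pos i).ne'] at hz
    rw [Set.mem_vadd_set] at hz
    obtain ⟨b, hb, hbz⟩ := hz
    obtain ⟨w, hw, rfl⟩ := hb
    have hzx : z - x i = r i • w := by
      rw [← hbz]; simp [vadd_eq_add]
    have hgw : gauge K w < 1 := interior_subset_gauge_lt_one K hw
    rw [hzx, gauge_smul_of_nonneg (hr_pos i).le]
    calc r i • gauge K w < r i • 1 :=
          (smul_lt_smul_iff_of_pos_left (hr_pos i)).2 hgw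
      _ = r i := by simp
  -- bodies are compact
  have himg : ∀ i, x i +ᵥ r i • K
      = (fun z : EuclideanSpace ℝ (Fin d) => x i + r i • z) '' K := by
    intro i; ext z
    simp only [Set.mem_vadd_set, Set.mem_smul_set, Set.mem_image, vadd_eq_add]
    constructor
    · rintro ⟨_, ⟨w, hw, rfl⟩, rfl⟩; exact ⟨w, hw, rfl⟩
    · rintro ⟨w, hw, rfl⟩; exact ⟨_, ⟨w, hw, rfl⟩, rfl⟩
  have hBcomp : ∀ i, IsCompact (x i +ᵥ r i • K) := by
    intro i
    rw [himg i]
    exact hKcomp.image (by fun_prop)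
  have hBconv : ∀ i, Convex ℝ (x i +ᵥ r i • K) := by
    intro i
    exact (hKconv.smul _).vadd _
  -- null intersections
  have hnull : ∀ i j, i ≠ j →
      volume ((x i +ᵥ r i • K) ∩ (x j +ᵥ r j • K)) = 0 := by
    intro i j hij
    have hsub : (x i +ᵥ r i • K) ∩ (x j +ᵥ r j • K) ⊆ frontier (x i +ᵥ r i • K) := by
      rintro z ⟨hzi, hzj⟩
      refine ⟨subset_closure hzi, fun hzint => ?_⟩
      have h1 := hint_gauge i z hzint
      have h2 := hmem_gauge j z hzj
      have h3 : gauge K (x i - x j) ≤ gauge K (x i - z) + gauge K (z - x j) := by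
        have := htri (x i - z) (z - x j)
        simpa [sub_add_sub_cancel] using this
      have h4 : gauge K (x i - z) = gauge K (z - x i) := by
        rw [← hgsym (z - x i), neg_sub]
      have h5 : gauge K (x i - x j) < r i + r j := by
        rw [h4] at h3; linarith
      have hmax : r i + r j ≤ max (lam i + μ * lam j) (lam j + μ * lam i) := by
        rcases le_total (lam i + μ * lam j) (lam j + μ * lam i) with h | h
        · rw [max_eq_right h]; simp only [hrdef]; linarith
        · rw [max_eq_left h]; simp only [hrdef]; linarith
      have := harr i j hij
      linarith
    exact measure_mono_null hsub ((hBconv i).addHaar_frontier volume)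
  -- volume formula
  have hvol : ∀ (v : EuclideanSpace ℝ (Fin d)) (c : ℝ), 0 ≤ c →
      volume (v +ᵥ c • K) = ENNReal.ofReal (c ^ d) * volume K := by
    intro v c hc
    rw [measure_vadd, Measure.addHaar_smul_of_nonneg volume hc, finrank_euclideanSpace_fin]
  set c : ℝ≥0∞ := ENNReal.ofReal ((2 / (1 + μ)) ^ d) with hc
  have hcne : c ≠ ⊤ := ENNReal.ofReal_ne_top
  have hterm : ∀ i, volume (x i +ᵥ lam i • K) = c * volume (x i +ᵥ r i • K) := by
    intro i
    rw [hvol _ _ (hlam_pos i).le, hvol _ _ (hr_pos i).le, ← mul_assoc, hc,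
      ← ENNReal.ofReal_mul (by positivity)]
    congr 2
    rw [← mul_pow]
    congr 1
    simp only [hrdef]
    field_simp
  set C : ℝ := C₂ * M with hC
  have hC0 : 0 ≤ C := mul_nonneg (by linarith) hM0
  -- containment
  have hcontain : ∀ (R : ℝ) i, ‖x i‖ ≤ R →
      (x i +ᵥ r i • K) ⊆ closedBall (0 : EuclideanSpace ℝ (Fin d)) (R + C) := by
    intro R i hxi z hz
    rw [Set.mem_vadd_set] at hz
    obtain ⟨b, hb, hbz⟩ := hz
    obtain ⟨w, hw, rfl⟩ := hb
    have hzeq : z = x i + r i • w := by rw [← hbz]; simp [vadd_eq_add]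
    have hwM : ‖w‖ ≤ M := by
      have := hKM hw; rwa [mem_closedBall_zero_iff] at this
    rw [mem_closedBall_zero_iff, hzeq]
    calc ‖x i + r i • w‖ ≤ ‖x i‖ + ‖r i • w‖ := norm_add_le _ _
      _ = ‖x i‖ + r i * ‖w‖ := by rw [norm_smul, Real.norm_of_nonneg (hr_pos i).le]
      _ ≤ R + C₂ * M := by
          have h1 : r i * ‖w‖ ≤ C₂ * M :=
            mul_le_mul (hr_le i) hwM (norm_nonneg _) (by linarith)
          linarith
      _ = R + C := rfl
  -- sum of shrunk volumes bounded by big ball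
  have hsum : ∀ R : ℝ, (∑' i, if ‖x i‖ ≤ R then volume (x i +ᵥ r i • K) else 0)
      ≤ volume (closedBall (0 : EuclideanSpace ℝ (Fin d)) (R + C)) := by
    intro R
    set S : ℕ → Set (EuclideanSpace ℝ (Fin d)) :=
      fun i => if ‖x i‖ ≤ R then x i +ᵥ r i • K else ∅ with hS
    have hSsub : ∀ i, S i ⊆ x i +ᵥ r i • K := by
      intro i; by_cases h : ‖x i‖ ≤ R <;> simp [hS, h]
    have hdisj : Pairwise (Function.onFun (AEDisjoint volume) S) := by
      intro i j hij
      exact measure_mono_null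
        (Set.inter_subset_inter (hSsub i) (hSsub j)) (hnull i j hij)
    have hmeas : ∀ i, NullMeasurableSet (S i) volume := by
      intro i
      by_cases h : ‖x i‖ ≤ R
      · simp only [hS, if_pos h]
        exact ((hBcomp i).measurableSet).nullMeasurableSet
      · simp only [hS, if_neg h]
        exact MeasurableSet.empty.nullMeasurableSet
    calc (∑' i, if ‖x i‖ ≤ R then volume (x i +ᵥ r i • K) else 0)
        = ∑' i, volume (S i) := by
          refine tsum_congr fun i => ?_
          by_cases h : ‖x i‖ ≤ R <;> simp [hS, h]
      _ = volume (⋃ i, S i) := (measure_iUnion₀ hdisj hmeas).symm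
      _ ≤ volume (closedBall (0 : EuclideanSpace ℝ (Fin d)) (R + C)) := by
          refine measure_mono (Set.iUnion_subset fun i => ?_)
          by_cases h : ‖x i‖ ≤ R
          · rw [hS]; simp only [if_pos h]
            exact hcontain R i h
          · simp [hS, h]
  set B : ℝ≥0∞ := volume (ball (0 : EuclideanSpace ℝ (Fin d)) 1) with hB
  have hB0 : B ≠ 0 := (measure_ball_pos volume _ one_pos).ne'
  have hBtop : B ≠ ⊤ := measure_ball_lt_top.ne
  -- eventual bound
  set g : ℝ → ℝ≥0∞ := fun R => c * ENNReal.ofReal (((R + C) / R) ^ d) with hg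
  have hev : ∀ᶠ R : ℝ in atTop,
      (∑' i : ℕ, if ‖x i‖ ≤ R then volume (x i +ᵥ lam i • K) else 0) /
        volume (closedBall (0 : EuclideanSpace ℝ (Fin d)) R) ≤ g R := by
    filter_upwards [eventually_ge_atTop (1:ℝ)] with R hR
    have hR0 : (0:ℝ) < R := lt_of_lt_of_le one_pos hR
    have hnum : (∑' i : ℕ, if ‖x i‖ ≤ R then volume (x i +ᵥ lam i • K) else 0)
        ≤ c * volume (closedBall (0 : EuclideanSpace ℝ (Fin d)) (R + C)) := by
      calc (∑' i : ℕ, if ‖x i‖ ≤ R then volume (x i +ᵥ lam i • K) else 0)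
          = ∑' i : ℕ, c * (if ‖x i‖ ≤ R then volume (x i +ᵥ r i • K) else 0) := by
            refine tsum_congr fun i => ?_
            rw [hterm i]
            by_cases h : ‖x i‖ ≤ R
            · rw [if_pos h, if_pos h]
            · rw [if_neg h, if_neg h, mul_zero]
        _ = c * ∑' i : ℕ, (if ‖x i‖ ≤ R then volume (x i +ᵥ r i • K) else 0) :=
            ENNReal.tsum_mul_left
        _ ≤ c * volume (closedBall (0 : EuclideanSpace ℝ (Fin d)) (R + C)) :=
            mul_le_mul_right (hsum R) c
    calc (∑' i : ℕ, if ‖x i‖ ≤ R then volume (x i +ᵥ lam i • K) else 0) /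
          volume (closedBall (0 : EuclideanSpace ℝ (Fin d)) R)
        ≤ (c * volume (closedBall (0 : EuclideanSpace ℝ (Fin d)) (R + C))) /
            volume (closedBall (0 : EuclideanSpace ℝ (Fin d)) R) :=
          ENNReal.div_le_div_right hnum _
      _ = g R := by
          rw [Measure.addHaar_closedBall _ _ (by linarith : (0:ℝ) ≤ R + C),
            Measure.addHaar_closedBall _ _ hR0.le, finrank_euclideanSpace_fin]
          rw [← hB, ← mul_assoc, ENNReal.mul_div_mul_right _ _ hB0 hBtop,
            mul_div_assoc, ← ENNReal.ofReal_div_of_pos (by positivity), ← div_pow]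
  -- the comparison function tends to c
  have hgt : Tendsto g atTop (nhds c) := by
    have h1 : Tendsto (fun R : ℝ => (R + C) / R) atTop (nhds 1) := by
      have h2 : Tendsto (fun R : ℝ => 1 + C / R) atTop (nhds 1) := by
        have := Tendsto.div_atTop (tendsto_const_nhds (x := C)) tendsto_id
        simpa using tendsto_const_nhds.add this
      refine h2.congr' ?_
      filter_upwards [eventually_gt_atTop (0:ℝ)] with R hR
      field_simp
    have h3 : Tendsto (fun R : ℝ => ((R + C) / R) ^ d) atTop (nhds 1) := by
      simpa using h1.pow d
    have h4 : Tendsto (fun R : ℝ => ENNReal.ofReal (((R + C) / R) ^ d)) atTop (nhds 1) := by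
      simpa using ENNReal.tendsto_ofReal h3
    have := ENNReal.Tendsto.const_mul h4 (Or.inr hcne)
    simpa [hg] using this
  calc Filter.limsup (fun R : ℝ =>
      (∑' i : ℕ, if ‖x i‖ ≤ R then volume (x i +ᵥ lam i • K) else 0) /
        volume (closedBall (0 : EuclideanSpace ℝ (Fin d)) R)) Filter.atTop
      ≤ Filter.limsup g Filter.atTop := limsup_le_limsup hev
    _ = c := hgt.limsup_eq
    _ = ENNReal.ofReal (2 ^ d / (1 + μ) ^ d) := by rw [hc, div_pow]
end

section
/- Let 0 < γ < π and A, B > 0. Let T = [x, y, z] be a triangle in ℝ² with angle γ at z, |x − z| = A and |y − z| = B, let Δ(γ) be the area of T, and let α(γ) and β(γ) be the angles of T at x and y respectively. Then for any fixed A, B > 0, the function f_{A,B}(γ) = (α(γ)·A² + β(γ)·B²)/Δ(γ) is strictly decreasing on γ ∈ (0, π). -/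
open Real EuclideanGeometry Set

noncomputable section

abbrev Plane := EuclideanSpace ℝ (Fin 2)

set_option maxHeartbeats 1000000
section Aux

lemma hasDeriv_part (A B : ℝ) (hA : 0 < A) (hB : 0 < B) {γ : ℝ} (hγ : γ ∈ Ioo 0 π) :
    HasDerivAt (fun t : ℝ =>
        Real.arccos ((A - B * Real.cos t) / Real.sqrt (A^2 + B^2 - 2*A*B*Real.cos t)))
      (B * (A * Real.cos γ - B) / (Real.sqrt (A^2 + B^2 - 2*A*B*Real.cos γ))^2) γ := by
  obtain ⟨hγ0, hγπ⟩ := hγ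
  set c := Real.cos γ with hc
  set s := Real.sin γ with hs
  have hspos : 0 < s := Real.sin_pos_of_pos_of_lt_pi hγ0 hγπ
  have hsc : s^2 + c^2 = 1 := Real.sin_sq_add_cos_sq γ
  have hc2 : c^2 < 1 := by nlinarith
  have hclt : c < 1 := by nlinarith [sq_nonneg (c-1)]
  have hQ : 0 < A^2 + B^2 - 2*A*B*c := by nlinarith [sq_nonneg (A - B), mul_pos hA hB]
  set C := Real.sqrt (A^2 + B^2 - 2*A*B*c) with hCdef
  have hCpos : 0 < C := Real.sqrt_pos.2 hQ
  have hC2 : C^2 = A^2 + B^2 - 2*A*B*c := Real.sq_sqrt hQ.le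
  have hq : HasDerivAt (fun t : ℝ => A^2 + B^2 - 2*A*B*Real.cos t) (2*A*B*s) γ := by
    have h1 := ((Real.hasDerivAt_cos γ).const_mul (2*A*B)).const_sub (A^2 + B^2)
    rw [show 2*A*B*s = -(2*A*B * -Real.sin γ) by rw [hs]; ring]
    exact h1
  have hsq : HasDerivAt (fun t : ℝ => Real.sqrt (A^2 + B^2 - 2*A*B*Real.cos t))
      (2*A*B*s / (2*C)) γ := hq.sqrt hQ.ne'
  have hnum : HasDerivAt (fun t : ℝ => A - B * Real.cos t) (B*s) γ := by
    have h1 := ((Real.hasDerivAt_cos γ).const_mul B).const_sub A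
    rw [show B*s = -(B * -Real.sin γ) by rw [hs]; ring]
    exact h1
  have hg : HasDerivAt (fun t : ℝ => (A - B * Real.cos t) / Real.sqrt (A^2 + B^2 - 2*A*B*Real.cos t))
      ((B*s * C - (A - B*c) * (2*A*B*s / (2*C))) / C^2) γ := hnum.div hsq hCpos.ne'
  have hlt : (A - B*c)^2 < C^2 := by rw [hC2]; nlinarith [mul_pos hB hB]
  set g := (A - B*c) / C with hgdef
  have hg2 : g^2 < 1 := by
    rw [hgdef, div_pow, div_lt_one (by positivity)]
    exact hlt
  have hg1 : g ≠ 1 := by nlinarith [sq_nonneg (g-1)]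
  have hgm1 : g ≠ -1 := by nlinarith [sq_nonneg (g+1)]
  have h1g : 1 - g^2 = (B*s/C)^2 := by
    rw [hgdef, div_pow, div_pow]
    rw [eq_div_iff (by positivity)]
    field_simp
    nlinarith [hC2, hsc]
  have hsqrt1g : Real.sqrt (1 - g^2) = B*s/C := by
    rw [h1g, Real.sqrt_sq (by positivity)]
  have harc : HasDerivAt (fun t : ℝ =>
        Real.arccos ((A - B * Real.cos t) / Real.sqrt (A^2 + B^2 - 2*A*B*Real.cos t)))
      (-(1 / Real.sqrt (1 - g^2)) * ((B*s * C - (A - B*c) * (2*A*B*s / (2*C))) / C^2)) γ :=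
    (Real.hasDerivAt_arccos hgm1 hg1).comp (h₂ := Real.arccos) γ hg
  convert harc using 1
  rw [hsqrt1g]
  have hCC : C * C = A^2 + B^2 - 2*A*B*c := by nlinarith [hC2]
  field_simp
  linear_combination hC2


lemma mul_cos_lt_key {x : ℝ} (hx : 0 < x) (hxπ : x < π) : x * Real.cos x < Real.sin x := by
  rcases lt_or_ge x (π/2) with h | h
  · have hc : 0 < Real.cos x := Real.cos_pos_of_mem_Ioo ⟨by linarith [Real.pi_pos], h⟩
    have ht := Real.lt_tan hx h
    rw [Real.tan_eq_sin_div_cos] at ht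
    calc x * Real.cos x < (Real.sin x / Real.cos x) * Real.cos x :=
          mul_lt_mul_of_pos_right ht hc
      _ = Real.sin x := by field_simp
  · have hc : Real.cos x ≤ 0 := Real.cos_nonpos_of_pi_div_two_le_of_le h (by linarith [Real.pi_pos])
    have hs : 0 < Real.sin x := Real.sin_pos_of_pos_of_lt_pi hx hxπ
    nlinarith

lemma lemT {a b : ℝ} (ha : 0 < a) (hb : 0 < b) (hab : a + b < π) :
    b * Real.cos (a + b) < Real.cos a * Real.sin b := by
  have hπ := Real.pi_pos
  have haπ : a < π := by linarith
  have hbπ : b < π := by linarith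
  have hsa : 0 < Real.sin a := Real.sin_pos_of_pos_of_lt_pi ha haπ
  have hsb : 0 < Real.sin b := Real.sin_pos_of_pos_of_lt_pi hb hbπ
  rcases le_or_gt 0 (Real.cos a) with hca | hca
  · have hk := mul_cos_lt_key hb hbπ
    have h1 : Real.cos a * (b * Real.cos b) ≤ Real.cos a * Real.sin b :=
      mul_le_mul_of_nonneg_left hk.le hca
    have h2 : 0 < b * (Real.sin a * Real.sin b) := by positivity
    rw [Real.cos_add]
    nlinarith
  · have ha2 : π/2 < a := by
      by_contra hle
      push_neg at hle
      exact absurd (Real.cos_nonneg_of_mem_Icc ⟨by linarith, hle⟩) (not_le.2 hca)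
    set u := π - a with hu
    have hu1 : 0 < u := by simp [hu]; linarith
    have hu2 : u < π/2 := by simp [hu]; linarith
    have hbu : b < u := by simp [hu]; linarith
    have hcu : 0 < Real.cos u := Real.cos_pos_of_mem_Ioo ⟨by linarith, hu2⟩
    have hcub : Real.cos u < Real.cos (u - b) :=
      Real.cos_lt_cos_of_nonneg_of_le_pi (by linarith) (by linarith) (by linarith)
    have hab' : Real.cos (a + b) = -Real.cos (u - b) := by
      have h : a + b = π - (u - b) := by simp [hu]; ring
      rw [h, Real.cos_pi_sub]
    have hca' : Real.cos a = -Real.cos u := by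
      have h : a = π - u := by simp [hu]
      rw [h, Real.cos_pi_sub]
    rw [hab', hca']
    have hsblt : Real.sin b < b := Real.sin_lt hb
    nlinarith

/-- The core sign inequality for the derivative numerator. -/
lemma core_sign (A B : ℝ) (hA : 0 < A) (hB : 0 < B) {γ : ℝ} (hγ : γ ∈ Ioo 0 π) :
    (B * (A * Real.cos γ - B) / (Real.sqrt (A^2 + B^2 - 2*A*B*Real.cos γ))^2 * A^2 +
     A * (B * Real.cos γ - A) / (Real.sqrt (A^2 + B^2 - 2*A*B*Real.cos γ))^2 * B^2) * Real.sin γ -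
    (Real.arccos ((A - B * Real.cos γ) / Real.sqrt (A^2 + B^2 - 2*A*B*Real.cos γ)) * A^2 +
     Real.arccos ((B - A * Real.cos γ) / Real.sqrt (A^2 + B^2 - 2*A*B*Real.cos γ)) * B^2) *
      Real.cos γ < 0 := by
  obtain ⟨hγ0, hγπ⟩ := hγ
  set c := Real.cos γ with hc
  set s := Real.sin γ with hs
  have hspos : 0 < s := Real.sin_pos_of_pos_of_lt_pi hγ0 hγπ
  have hsc : s^2 + c^2 = 1 := Real.sin_sq_add_cos_sq γ
  have hc2lt : c^2 < 1 := by linarith only [hsc, mul_pos hspos hspos]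
  have hclt : c < 1 := by linarith only [hc2lt, sq_nonneg (c-1)]
  have hQ : 0 < A^2 + B^2 - 2*A*B*c := by
    linarith only [sq_nonneg (A - B), mul_pos (mul_pos hA hB) (sub_pos.mpr hclt)]
  set C := Real.sqrt (A^2 + B^2 - 2*A*B*c) with hCdef
  have hCpos : 0 < C := Real.sqrt_pos.2 hQ
  have hC2 : C^2 = A^2 + B^2 - 2*A*B*c := Real.sq_sqrt hQ.le
  -- facts about gA := (A - B*c)/C and α := arccos gA
  have hltA : (A - B*c)^2 < C^2 := by
    rw [hC2]; linarith only [mul_pos (mul_pos hB hB) (sub_pos.mpr hc2lt)]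
  have hltB : (B - A*c)^2 < C^2 := by
    rw [hC2]; linarith only [mul_pos (mul_pos hA hA) (sub_pos.mpr hc2lt)]
  have hgA2 : ((A - B*c)/C)^2 < 1 := by
    rw [div_pow, div_lt_one (by positivity)]; exact hltA
  have hgB2 : ((B - A*c)/C)^2 < 1 := by
    rw [div_pow, div_lt_one (by positivity)]; exact hltB
  have hgA1 : (A - B*c)/C < 1 := by linarith only [hgA2, sq_nonneg ((A - B*c)/C - 1)]
  have hgAm1 : -1 < (A - B*c)/C := by linarith only [hgA2, sq_nonneg ((A - B*c)/C + 1)]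
  have hgB1 : (B - A*c)/C < 1 := by linarith only [hgB2, sq_nonneg ((B - A*c)/C - 1)]
  have hgBm1 : -1 < (B - A*c)/C := by linarith only [hgB2, sq_nonneg ((B - A*c)/C + 1)]
  set α := Real.arccos ((A - B*c)/C) with hα
  set β := Real.arccos ((B - A*c)/C) with hβ
  have hα0 : 0 < α := Real.arccos_pos.2 hgA1
  have hαπ : α ≤ π := Real.arccos_le_pi _
  have hβ0 : 0 < β := Real.arccos_pos.2 hgB1
  have hβπ : β ≤ π := Real.arccos_le_pi _
  have hcosα : Real.cos α = (A - B*c)/C := Real.cos_arccos (by linarith) (by linarith)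
  have hcosβ : Real.cos β = (B - A*c)/C := Real.cos_arccos (by linarith) (by linarith)
  have hsinα : Real.sin α = B*s/C := by
    rw [hα, Real.sin_arccos]
    have h1g : 1 - ((A - B*c)/C)^2 = (B*s/C)^2 := by
      rw [div_pow, div_pow, eq_div_iff (by positivity)]
      field_simp
      nlinarith [hC2, hsc]
    rw [h1g, Real.sqrt_sq (by positivity)]
  have hsinβ : Real.sin β = A*s/C := by
    rw [hβ, Real.sin_arccos]
    have h1g : 1 - ((B - A*c)/C)^2 = (A*s/C)^2 := by
      rw [div_pow, div_pow, eq_div_iff (by positivity)]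
      field_simp
      nlinarith [hC2, hsc]
    rw [h1g, Real.sqrt_sq (by positivity)]
  -- sum of angles
  have hsinsum : Real.sin (α + β) = s := by
    rw [Real.sin_add, hsinα, hsinβ, hcosα, hcosβ]
    field_simp
    linear_combination (-1) * hC2
  have hsumlt : α + β < π := by
    by_contra hge
    push_neg at hge
    have h1 : 0 ≤ Real.sin (α + β - π) :=
      Real.sin_nonneg_of_nonneg_of_le_pi (by linarith) (by linarith)
    rw [Real.sin_sub_pi, hsinsum] at h1
    linarith
  have hcossum : Real.cos (α + β) = -c := by
    rw [Real.cos_add, hsinα, hsinβ, hcosα, hcosβ]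
    field_simp
    linear_combination c * hC2 - A*B*hsc
  -- apply lemT twice
  have hX := lemT hα0 hβ0 hsumlt
  have hY := lemT hβ0 hα0 (by linarith)
  rw [hcossum, hcosα, hsinβ] at hX
  rw [add_comm β α, hcossum, hcosβ, hsinα] at hY
  -- hX : β * (-c) < (A - B*c)/C * (A*s/C),  hY : α * (-c) < (B - A*c)/C * (B*s/C)
  have hX1 : 0 < (A - B*c)/C * (A*s/C) + β * c := by linarith only [hX]
  have hY1 : 0 < (B - A*c)/C * (B*s/C) + α * c := by linarith only [hY]
  have hX2 : 0 < (A - B*c) * (A*s) + β * c * C^2 := by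
    have h := mul_pos hX1 (by positivity : (0:ℝ) < C^2)
    have he : ((A - B*c)/C * (A*s/C) + β * c) * C^2 = (A - B*c) * (A*s) + β * c * C^2 := by
      field_simp
    rwa [he] at h
  have hY2 : 0 < (B - A*c) * (B*s) + α * c * C^2 := by
    have h := mul_pos hY1 (by positivity : (0:ℝ) < C^2)
    have he : ((B - A*c)/C * (B*s/C) + α * c) * C^2 = (B - A*c) * (B*s) + α * c * C^2 := by
      field_simp
    rwa [he] at h
  -- combine
  have hfinal : (B*(A*c - B)*A^2 + A*(B*c - A)*B^2) * s - (α*A^2 + β*B^2) * c * C^2 < 0 := by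
    have hAY := mul_pos (pow_pos hA 2) hY2
    have hBX := mul_pos (pow_pos hB 2) hX2
    linarith only [hAY, hBX]
  have hgoal : (B * (A*c - B) / C^2 * A^2 + A * (B*c - A) / C^2 * B^2) * s -
      (α*A^2 + β*B^2) * c =
      ((B*(A*c - B)*A^2 + A*(B*c - A)*B^2) * s - (α*A^2 + β*B^2) * c * C^2) / C^2 := by
    field_simp
  rw [hgoal]
  exact div_neg_of_neg_of_pos hfinal (by positivity)

lemma hasDeriv_full (A B : ℝ) (hA : 0 < A) (hB : 0 < B) {γ : ℝ} (hγ : γ ∈ Ioo 0 π) :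
    ∃ v : ℝ, v < 0 ∧ HasDerivAt (fun t : ℝ =>
      (Real.arccos ((A - B * Real.cos t) / Real.sqrt (A^2 + B^2 - 2*A*B*Real.cos t)) * A^2 +
       Real.arccos ((B - A * Real.cos t) / Real.sqrt (A^2 + B^2 - 2*A*B*Real.cos t)) * B^2) /
        Real.sin t) v γ := by
  have hspos : 0 < Real.sin γ := Real.sin_pos_of_pos_of_lt_pi hγ.1 hγ.2
  have h1 := (hasDeriv_part A B hA hB hγ).mul_const (A^2)
  have h2' := (hasDeriv_part B A hB hA hγ).mul_const (B^2)
  have e : ∀ t : ℝ, B^2 + A^2 - 2*B*A*Real.cos t = A^2 + B^2 - 2*A*B*Real.cos t :=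
    fun t => by ring
  simp only [e] at h2'
  have hN := h1.add h2'
  have hF := hN.div (Real.hasDerivAt_sin γ) hspos.ne'
  refine ⟨_, ?_, hF⟩
  apply div_neg_of_neg_of_pos
  · exact core_sign A B hA hB hγ
  · positivity

lemma mainAnti (A B : ℝ) (hA : 0 < A) (hB : 0 < B) :
    StrictAntiOn (fun t : ℝ =>
      (Real.arccos ((A - B * Real.cos t) / Real.sqrt (A^2 + B^2 - 2*A*B*Real.cos t)) * A^2 +
       Real.arccos ((B - A * Real.cos t) / Real.sqrt (A^2 + B^2 - 2*A*B*Real.cos t)) * B^2) /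
        Real.sin t) (Ioo 0 π) := by
  apply strictAntiOn_of_deriv_neg (convex_Ioo 0 π)
  · intro t ht
    obtain ⟨v, _, hd⟩ := hasDeriv_full A B hA hB ht
    exact hd.differentiableAt.continuousAt.continuousWithinAt
  · intro t ht
    rw [interior_Ioo] at ht
    obtain ⟨v, hv, hd⟩ := hasDeriv_full A B hA hB ht
    rw [hd.deriv]
    exact hv



/-- angle at x in terms of data -/
lemma angle_at_vertex (A B : ℝ) (hA : 0 < A) (hB : 0 < B) {γ : ℝ} (hγ : γ ∈ Set.Ioo 0 π)
    (x y z : Plane) (ha : dist x z = A) (hb : dist y z = B) (hg : ∠ x z y = γ) :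
    ∠ y x z = Real.arccos ((A - B*Real.cos γ) / Real.sqrt (A^2 + B^2 - 2*A*B*Real.cos γ)) := by
  obtain ⟨hγ0, hγπ⟩ := hγ
  have hspos : 0 < Real.sin γ := Real.sin_pos_of_pos_of_lt_pi hγ0 hγπ
  have hsc : Real.sin γ^2 + Real.cos γ^2 = 1 := Real.sin_sq_add_cos_sq γ
  have hc2lt : Real.cos γ^2 < 1 := by linarith only [hsc, mul_pos hspos hspos]
  have hclt : Real.cos γ < 1 := by linarith only [hc2lt, sq_nonneg (Real.cos γ - 1)]
  have hQ : 0 < A^2 + B^2 - 2*A*B*Real.cos γ := by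
    linarith only [sq_nonneg (A - B), mul_pos (mul_pos hA hB) (sub_pos.mpr hclt)]
  have hCpos : 0 < Real.sqrt (A^2 + B^2 - 2*A*B*Real.cos γ) := Real.sqrt_pos.2 hQ
  have hC2 : Real.sqrt (A^2 + B^2 - 2*A*B*Real.cos γ)^2 = A^2 + B^2 - 2*A*B*Real.cos γ :=
    Real.sq_sqrt hQ.le
  have hxy2 : dist x y^2 = A^2 + B^2 - 2*A*B*Real.cos γ := by
    have h := EuclideanGeometry.law_cos x z y (V := EuclideanSpace ℝ (Fin 2))
    rw [ha, hb, hg] at h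
    linarith [h]
  have hxy : dist x y = Real.sqrt (A^2 + B^2 - 2*A*B*Real.cos γ) := by
    rw [← hxy2, Real.sqrt_sq dist_nonneg]
  have hlc := EuclideanGeometry.law_cos y x z (V := EuclideanSpace ℝ (Fin 2))
  rw [dist_comm y x, dist_comm z x, hxy, ha, hb] at hlc
  rw [Real.mul_self_sqrt hQ.le] at hlc
  have hcosθ : Real.cos (∠ y x z) =
      (A - B*Real.cos γ) / Real.sqrt (A^2 + B^2 - 2*A*B*Real.cos γ) := by
    rw [eq_div_iff hCpos.ne']
    have h3 : (2*A) * (Real.cos (∠ y x z) * Real.sqrt (A^2 + B^2 - 2*A*B*Real.cos γ)) =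
        (2*A) * (A - B*Real.cos γ) := by linear_combination hlc
    exact mul_left_cancel₀ (by positivity) h3
  rw [← hcosθ, Real.arccos_cos (EuclideanGeometry.angle_nonneg _ _ _)
    (EuclideanGeometry.angle_le_pi _ _ _)]


end Aux


/-- For fixed side lengths `A, B > 0`, consider a triangle `[x, y, z]` with
angle `γ` at `z`, `|x - z| = A`, `|y - z| = B`, area `Δ(γ) = (1/2)·A·B·sin γ`, and
angles `α(γ)` at `x` and `β(γ)` at `y`.  The function
`f(γ) = (α(γ)·A² + β(γ)·B²)/Δ(γ)` is strictly decreasing on `(0, π)`. -/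
theorem stmt_5 (A B : ℝ) (hA : 0 < A) (hB : 0 < B)
    (γ₁ γ₂ : ℝ) (hγ₁ : γ₁ ∈ Set.Ioo 0 π) (hγ₂ : γ₂ ∈ Set.Ioo 0 π) (hlt : γ₁ < γ₂)
    (x₁ y₁ z₁ x₂ y₂ z₂ : Plane)
    (ha₁ : dist x₁ z₁ = A) (hb₁ : dist y₁ z₁ = B) (hg₁ : ∠ x₁ z₁ y₁ = γ₁)
    (ha₂ : dist x₂ z₂ = A) (hb₂ : dist y₂ z₂ = B) (hg₂ : ∠ x₂ z₂ y₂ = γ₂) :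
    (∠ y₂ x₂ z₂ * A ^ 2 + ∠ x₂ y₂ z₂ * B ^ 2) / (1 / 2 * A * B * Real.sin γ₂) <
      (∠ y₁ x₁ z₁ * A ^ 2 + ∠ x₁ y₁ z₁ * B ^ 2) / (1 / 2 * A * B * Real.sin γ₁) := by
  have h10 := hγ₁.1
  have h1π := hγ₁.2
  have h20 := hγ₂.1
  have h2π := hγ₂.2
  have hs₁ : 0 < Real.sin γ₁ := Real.sin_pos_of_pos_of_lt_pi h10 h1π
  have hs₂ : 0 < Real.sin γ₂ := Real.sin_pos_of_pos_of_lt_pi h20 h2π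
  have hax1 := angle_at_vertex A B hA hB hγ₁ x₁ y₁ z₁ ha₁ hb₁ hg₁
  have hax2 := angle_at_vertex A B hA hB hγ₂ x₂ y₂ z₂ ha₂ hb₂ hg₂
  have hay1 := angle_at_vertex B A hB hA hγ₁ y₁ x₁ z₁ hb₁ ha₁
    (by rw [EuclideanGeometry.angle_comm]; exact hg₁)
  have hay2 := angle_at_vertex B A hB hA hγ₂ y₂ x₂ z₂ hb₂ ha₂
    (by rw [EuclideanGeometry.angle_comm]; exact hg₂)
  rw [show B^2 + A^2 - 2*B*A*Real.cos γ₁ = A^2 + B^2 - 2*A*B*Real.cos γ₁ from by ring] at hay1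
  rw [show B^2 + A^2 - 2*B*A*Real.cos γ₂ = A^2 + B^2 - 2*A*B*Real.cos γ₂ from by ring] at hay2
  rw [hax1, hax2, hay1, hay2]
  have H := mainAnti A B hA hB hγ₁ hγ₂ hlt
  have key : ∀ N s : ℝ, 0 < s → N / (1/2*A*B*s) = (N/s) * (2/(A*B)) := by
    intro N s hs
    rw [div_mul_div_comm, div_eq_div_iff (by positivity) (by positivity)]
    ring
  rw [key _ _ hs₂, key _ _ hs₁]
  exact mul_lt_mul_of_pos_right H (by positivity)

end
end

section
/- Let 0 < ν < 1, let x, y, z ∈ ℝ² be non-collinear points, and let B_u = u + ρ_u B² for u ∈ {x, y, z} be closed disks (ρ_u > 0) such that for any pair {u, v} ⊂ {x, y, z}: |u − v| ≥ max{ρ_u, ρ_v} + ν·min{ρ_u, ρ_v} and B_u ∩ B_v ≠ ∅. If B_x ∪ B_y ∪ B_z covers the triangle [x, y, z], then ν ≤ √3 − 1. -/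
open Real Metric Set

noncomputable section

open scoped RealInnerProductSpace

section Aux

variable {E : Type*} [NormedAddCommGroup E] [NormedSpace ℝ E]

/-- In a convex set, if a continuous linear functional takes a value below `u` and a value
above `u`, it takes the value `u`. -/
lemma cross_level {S : Set E} (hS : Convex ℝ S) (f : E →L[ℝ] ℝ) {p q : E} {u : ℝ}
    (hp : p ∈ S) (hq : q ∈ S) (h1 : f p < u) (h2 : u < f q) : ∃ r ∈ S, f r = u := by
  set t : ℝ := (u - f p) / (f q - f p) with ht
  have hden : 0 < f q - f p := by linarith
  have ht0 : 0 ≤ t := div_nonneg (by linarith) hden.le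
  have ht1 : t ≤ 1 := by
    rw [div_le_one hden]; linarith
  refine ⟨(1 - t) • p + t • q, hS hp hq (by linarith) ht0 (by ring), ?_⟩
  have : f ((1 - t) • p + t • q) = (1 - t) * f p + t * f q := by
    simp [map_add, map_smul]
  rw [this, ht]
  field_simp
  ring

/-- Berge-type intersection theorem for three convex sets covering a convex set. -/
lemma berge3 {A B C T : Set E} (hA : Convex ℝ A) (hB : Convex ℝ B) (hC : Convex ℝ C)
    (hAcl : IsClosed A) (hBcl : IsClosed B) (hCcl : IsClosed C)
    (hABc : IsCompact (A ∩ B))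
    (hAT : A ⊆ T) (hBT : B ⊆ T)
    (hT : Convex ℝ T) (hTsub : T ⊆ A ∪ B ∪ C)
    {pab pac pbc : E}
    (hpab : pab ∈ A ∩ B) (hpac : pac ∈ A ∩ C) (hpbc : pbc ∈ B ∩ C) :
    (A ∩ B ∩ C).Nonempty := by
  by_contra hn
  have hdisj : Disjoint (A ∩ B) C := by
    rw [Set.disjoint_iff_inter_eq_empty]
    rwa [Set.not_nonempty_iff_eq_empty] at hn
  obtain ⟨f, u, v, hfu, huv, hfv⟩ :=
    geometric_hahn_banach_compact_closed (hA.inter hB) hABc hC hCcl hdisj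
  -- find points of A and B on the hyperplane f = u
  have hqA : ∃ r ∈ A, f r = u := by
    refine cross_level hA f hpab.1 hpac.1 (hfu _ hpab) ?_
    have := hfv _ hpac.2; linarith
  have hqB : ∃ r ∈ B, f r = u := by
    refine cross_level hB f hpab.2 hpbc.1 (hfu _ hpab) ?_
    have := hfv _ hpbc.2; linarith
  obtain ⟨qA, hqA1, hqA2⟩ := hqA
  obtain ⟨qB, hqB1, hqB2⟩ := hqB
  -- the segment from qA to qB lies in the hyperplane, hence in A ∪ B
  have hseg : segment ℝ qA qB ⊆ A ∪ B := by
    intro s hs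
    have hsT : s ∈ T := hT.segment_subset (hAT hqA1) (hBT hqB1) hs
    have hfs : f s = u := by
      obtain ⟨α, β, hα, hβ, hαβ, rfl⟩ := hs
      have : f (α • qA + β • qB) = α * f qA + β * f qB := by
        simp [map_add, map_smul]
      rw [this, hqA2, hqB2, ← add_mul, hαβ, one_mul]
    have hsC : s ∉ C := fun hsC => by have := hfv _ hsC; linarith
    rcases hTsub hsT with (h | h) | h
    · exact Or.inl h
    · exact Or.inr h
    · exact absurd h hsC
  have hpre : IsPreconnected (segment ℝ qA qB) := (convex_segment qA qB).isPreconnected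
  obtain ⟨r, hrseg, hrA, hrB⟩ :=
    isPreconnected_closed_iff.1 hpre A B hAcl hBcl hseg
      ⟨qA, left_mem_segment ℝ qA qB, hqA1⟩ ⟨qB, right_mem_segment ℝ qA qB, hqB1⟩
  have hfr : f r = u := by
    obtain ⟨α, β, hα, hβ, hαβ, rfl⟩ := hrseg
    have : f (α • qA + β • qB) = α * f qA + β * f qB := by
      simp [map_add, map_smul]
    rw [this, hqA2, hqB2, ← add_mul, hαβ, one_mul]
  have := hfu r ⟨hrA, hrB⟩
  linarith

end Aux

/-- Among three nonzero vectors, some pair has inner product at least `-‖u‖‖v‖/2`. -/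
lemma angle_trick {F : Type*} [NormedAddCommGroup F] [InnerProductSpace ℝ F]
    (a b c : F) :
    -(‖a‖ * ‖b‖) / 2 ≤ ⟪a, b⟫ ∨ -(‖a‖ * ‖c‖) / 2 ≤ ⟪a, c⟫ ∨
      -(‖b‖ * ‖c‖) / 2 ≤ ⟪b, c⟫ := by
  by_contra hk
  push_neg at hk
  obtain ⟨k1, k2, k3⟩ := hk
  set na := ‖a‖ with hna
  set nb := ‖b‖ with hnb
  set nc := ‖c‖ with hnc
  have hna0 : 0 ≤ na := norm_nonneg a
  have hnb0 : 0 ≤ nb := norm_nonneg b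
  have hnc0 : 0 ≤ nc := norm_nonneg c
  have hna1 : 0 < na := by
    rcases hna0.lt_or_eq with h | h
    · exact h
    · exfalso
      have : a = 0 := by rwa [eq_comm, norm_eq_zero] at h
      rw [this] at k1
      simp at k1
      nlinarith
  have hnb1 : 0 < nb := by
    rcases hnb0.lt_or_eq with h | h
    · exact h
    · exfalso
      have : b = 0 := by rwa [eq_comm, norm_eq_zero] at h
      rw [this] at k1
      simp at k1
      nlinarith
  have hnc1 : 0 < nc := by
    rcases hnc0.lt_or_eq with h | h
    · exact h
    · exfalso
      have : c = 0 := by rwa [eq_comm, norm_eq_zero] at h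
      rw [this] at k2
      simp at k2
      nlinarith
  have hq : (0:ℝ) ≤
      ⟪(nb * nc) • a + ((na * nc) • b + (na * nb) • c),
        (nb * nc) • a + ((na * nc) • b + (na * nb) • c)⟫ := real_inner_self_nonneg
  simp only [inner_add_left, inner_add_right, real_inner_smul_left,
    real_inner_smul_right] at hq
  rw [real_inner_self_eq_norm_sq a, real_inner_self_eq_norm_sq b,
    real_inner_self_eq_norm_sq c, real_inner_comm a b, real_inner_comm a c,
    real_inner_comm b c, ← hna, ← hnb, ← hnc] at hq
  have m1 : 2 * ((na * nc) * (nb * nc)) * ⟪a, b⟫ <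
      2 * ((na * nc) * (nb * nc)) * (-(na * nb) / 2) := by
    apply mul_lt_mul_of_pos_left k1; positivity
  have m2 : 2 * ((na * nb) * (nb * nc)) * ⟪a, c⟫ <
      2 * ((na * nb) * (nb * nc)) * (-(na * nc) / 2) := by
    apply mul_lt_mul_of_pos_left k2; positivity
  have m3 : 2 * ((na * nb) * (na * nc)) * ⟪b, c⟫ <
      2 * ((na * nb) * (na * nc)) * (-(nb * nc) / 2) := by
    apply mul_lt_mul_of_pos_left k3; positivity
  nlinarith [hq, m1, m2, m3]

/-- The final algebraic step. -/
lemma pair_to_bound {ν ρu ρv d : ℝ} (hν0 : 0 < ν) (hu : 0 < ρu) (hv : 0 < ρv)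
    (hd : max ρu ρv + ν * min ρu ρv ≤ d)
    (hD : d ^ 2 ≤ ρu ^ 2 + ρu * ρv + ρv ^ 2) : ν ≤ Real.sqrt 3 - 1 := by
  set s := Real.sqrt 3 with hs
  have hs2 : s ^ 2 = 3 := Real.sq_sqrt (by norm_num)
  have hs0 : 0 < s := Real.sqrt_pos.mpr (by norm_num)
  have hs32 : 3 / 2 < s := by nlinarith
  by_contra h
  push_neg at h
  have hs1 : 0 ≤ s - 1 := by linarith
  have hsq : (s - 1) ^ 2 = 4 - 2 * s := by nlinarith
  rcases le_total ρu ρv with hc | hc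
  · rw [max_eq_right hc, min_eq_left hc] at hd
    have h0 : 0 ≤ ρv + ν * ρu := by positivity
    have h1 : (ρv + ν * ρu) ^ 2 ≤ d ^ 2 := by nlinarith
    have e1 : (s - 1) * (ρu * ρv) < ν * (ρu * ρv) :=
      mul_lt_mul_of_pos_right h (mul_pos hu hv)
    have e2 : (4 - 2 * s) * ρu ^ 2 ≤ ν ^ 2 * ρu ^ 2 := by
      rw [← hsq]
      exact mul_le_mul_of_nonneg_right (by nlinarith : (s-1)^2 ≤ ν^2) (sq_nonneg ρu)
    have e3 : 0 ≤ (2 * s - 3) * (ρu * (ρv - ρu)) :=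
      mul_nonneg (by linarith) (mul_nonneg hu.le (by linarith))
    nlinarith [e1, e2, e3, h1, hD]
  · rw [max_eq_left hc, min_eq_right hc] at hd
    have h0 : 0 ≤ ρu + ν * ρv := by positivity
    have h1 : (ρu + ν * ρv) ^ 2 ≤ d ^ 2 := by nlinarith
    have e1 : (s - 1) * (ρu * ρv) < ν * (ρu * ρv) :=
      mul_lt_mul_of_pos_right h (mul_pos hu hv)
    have e2 : (4 - 2 * s) * ρv ^ 2 ≤ ν ^ 2 * ρv ^ 2 := by
      rw [← hsq]
      exact mul_le_mul_of_nonneg_right (by nlinarith : (s-1)^2 ≤ ν^2) (sq_nonneg ρv)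
    have e3 : 0 ≤ (2 * s - 3) * (ρv * (ρu - ρv)) :=
      mul_nonneg (by linarith) (mul_nonneg hv.le (by linarith))
    nlinarith [e1, e2, e3, h1, hD]

set_option maxHeartbeats 1000000 in
/-- If three closed disks centered at non-collinear points `x, y, z` form a
`ν`-arrangement, pairwise intersect, and cover the triangle `[x, y, z]`, then
`ν ≤ √3 - 1`. -/
theorem stmt_7 (ν : ℝ) (hν0 : 0 < ν) (hν1 : ν < 1)
    (x y z : Plane) (hncol : ¬ Collinear ℝ ({x, y, z} : Set Plane))
    (ρx ρy ρz : ℝ) (hρx : 0 < ρx) (hρy : 0 < ρy) (hρz : 0 < ρz)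
    (hxy : max ρx ρy + ν * min ρx ρy ≤ dist x y)
    (hxz : max ρx ρz + ν * min ρx ρz ≤ dist x z)
    (hyz : max ρy ρz + ν * min ρy ρz ≤ dist y z)
    (hixy : (closedBall x ρx ∩ closedBall y ρy).Nonempty)
    (hixz : (closedBall x ρx ∩ closedBall z ρz).Nonempty)
    (hiyz : (closedBall y ρy ∩ closedBall z ρz).Nonempty)
    (hcover : convexHull ℝ ({x, y, z} : Set Plane) ⊆
      closedBall x ρx ∪ closedBall y ρy ∪ closedBall z ρz) :
    ν ≤ Real.sqrt 3 - 1 := by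
  set T := convexHull ℝ ({x, y, z} : Set Plane) with hT
  have hTconv : Convex ℝ T := convex_convexHull ℝ _
  have hTcomp : IsCompact T := Set.Finite.isCompact_convexHull (𝕜 := ℝ) (Set.toFinite _)
  have hxT : x ∈ T := subset_convexHull ℝ _ (by simp)
  have hyT : y ∈ T := subset_convexHull ℝ _ (by simp)
  have hzT : z ∈ T := subset_convexHull ℝ _ (by simp)
  set A := closedBall x ρx ∩ T with hA
  set B := closedBall y ρy ∩ T with hB
  set C := closedBall z ρz ∩ T with hC
  have hAconv : Convex ℝ A := (convex_closedBall _ _).inter hTconv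
  have hBconv : Convex ℝ B := (convex_closedBall _ _).inter hTconv
  have hCconv : Convex ℝ C := (convex_closedBall _ _).inter hTconv
  have hAcl : IsClosed A := isClosed_closedBall.inter hTcomp.isClosed
  have hBcl : IsClosed B := isClosed_closedBall.inter hTcomp.isClosed
  have hCcl : IsClosed C := isClosed_closedBall.inter hTcomp.isClosed
  have hABc : IsCompact (A ∩ B) :=
    hTcomp.of_isClosed_subset (hAcl.inter hBcl) (fun w hw => hw.1.2)
  -- a point in both balls on each segment between centers
  have pair_pt : ∀ (a b : Plane) (ρa ρb : ℝ), 0 < ρa → 0 < ρb →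
      (closedBall a ρa ∩ closedBall b ρb).Nonempty →
      ∃ p ∈ segment ℝ a b, dist p a ≤ ρa ∧ dist p b ≤ ρb := by
    intro a b ρa ρb ha hb ⟨w, hw1, hw2⟩
    have hdab : dist a b ≤ ρa + ρb := by
      have h1 : dist a w ≤ ρa := by rwa [dist_comm, ← mem_closedBall]
      have h2 : dist w b ≤ ρb := by rwa [← mem_closedBall]
      calc dist a b ≤ dist a w + dist w b := dist_triangle a w b
        _ ≤ ρa + ρb := by linarith
    set t : ℝ := ρa / (ρa + ρb) with htdef
    have hab : 0 < ρa + ρb := by linarith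
    have ht0 : 0 ≤ t := div_nonneg ha.le hab.le
    have ht1 : t ≤ 1 := by rw [div_le_one hab]; linarith
    refine ⟨AffineMap.lineMap a b t, ?_, ?_, ?_⟩
    · rw [segment_eq_image_lineMap]; exact ⟨t, ⟨ht0, ht1⟩, rfl⟩
    · rw [dist_lineMap_left]
      have : ‖t‖ = t := abs_of_nonneg ht0
      rw [this, htdef, div_mul_eq_mul_div, div_le_iff₀ hab]
      nlinarith
    · rw [dist_lineMap_right]
      have h1t : (1 : ℝ) - t = ρb / (ρa + ρb) := by
        rw [htdef]; field_simp; ring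
      have : ‖1 - t‖ = 1 - t := abs_of_nonneg (by linarith)
      rw [this, h1t, div_mul_eq_mul_div, div_le_iff₀ hab]
      nlinarith
  obtain ⟨pab, hpabseg, hpab1, hpab2⟩ := pair_pt x y ρx ρy hρx hρy hixy
  obtain ⟨pac, hpacseg, hpac1, hpac2⟩ := pair_pt x z ρx ρz hρx hρz hixz
  obtain ⟨pbc, hpbcseg, hpbc1, hpbc2⟩ := pair_pt y z ρy ρz hρy hρz hiyz
  have hpabT : pab ∈ T := hTconv.segment_subset hxT hyT hpabseg
  have hpacT : pac ∈ T := hTconv.segment_subset hxT hzT hpacseg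
  have hpbcT : pbc ∈ T := hTconv.segment_subset hyT hzT hpbcseg
  have hTsub : T ⊆ A ∪ B ∪ C := by
    intro w hw
    rcases hcover hw with (h | h) | h
    · exact Or.inl (Or.inl ⟨h, hw⟩)
    · exact Or.inl (Or.inr ⟨h, hw⟩)
    · exact Or.inr ⟨h, hw⟩
  obtain ⟨p, ⟨⟨hpx, hpT⟩, hpy, -⟩, hpz, -⟩ :=
    berge3 hAconv hBconv hCconv hAcl hBcl hCcl hABc
      (fun w hw => hw.2) (fun w hw => hw.2) hTconv hTsub
      ⟨⟨hpab1, hpabT⟩, ⟨hpab2, hpabT⟩⟩ ⟨⟨hpac1, hpacT⟩, ⟨hpac2, hpacT⟩⟩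
      ⟨⟨hpbc1, hpbcT⟩, ⟨hpbc2, hpbcT⟩⟩
  rw [mem_closedBall] at hpx hpy hpz
  -- p is distinct from the centers
  have hminxy : 0 < min ρx ρy := lt_min hρx hρy
  have hminxz : 0 < min ρx ρz := lt_min hρx hρz
  have hminyz : 0 < min ρy ρz := lt_min hρy hρz
  have hpnex : p ≠ x := by
    intro h
    have h1 : dist x y ≤ ρy := h ▸ hpy
    have h2 : ρy ≤ max ρx ρy := le_max_right _ _
    nlinarith [mul_pos hν0 hminxy]
  have hpney : p ≠ y := by
    intro h
    have h1 : dist x y ≤ ρx := by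
      rw [dist_comm]; exact h ▸ hpx
    have h2 : ρx ≤ max ρx ρy := le_max_left _ _
    nlinarith [mul_pos hν0 hminxy]
  have hpnez : p ≠ z := by
    intro h
    have h1 : dist x z ≤ ρx := by
      rw [dist_comm]; exact h ▸ hpx
    have h2 : ρx ≤ max ρx ρz := le_max_left _ _
    nlinarith [mul_pos hν0 hminxz]
  set a : Plane := x - p with ha2
  set b : Plane := y - p with hb2
  set c : Plane := z - p with hc2
  have hna : 0 < ‖a‖ := norm_pos_iff.mpr (sub_ne_zero.mpr (Ne.symm hpnex))
  have hnb : 0 < ‖b‖ := norm_pos_iff.mpr (sub_ne_zero.mpr (Ne.symm hpney))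
  have hnc : 0 < ‖c‖ := norm_pos_iff.mpr (sub_ne_zero.mpr (Ne.symm hpnez))
  have hnax : ‖a‖ ≤ ρx := by
    rw [ha2, ← dist_eq_norm, dist_comm]; exact hpx
  have hnby : ‖b‖ ≤ ρy := by
    rw [hb2, ← dist_eq_norm, dist_comm]; exact hpy
  have hncz : ‖c‖ ≤ ρz := by
    rw [hc2, ← dist_eq_norm, dist_comm]; exact hpz
  -- one of the pairwise angles at p is at most 120°
  rcases angle_trick a b c with hkey | hkey | hkey
  · have hdist : dist x y = ‖a - b‖ := by
      rw [dist_eq_norm, ha2, hb2]; congr 1; abel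
    have hsq : dist x y ^ 2 ≤ ρx ^ 2 + ρx * ρy + ρy ^ 2 := by
      rw [hdist, norm_sub_sq_real]
      nlinarith
    exact pair_to_bound hν0 hρx hρy hxy hsq
  · have hdist : dist x z = ‖a - c‖ := by
      rw [dist_eq_norm, ha2, hc2]; congr 1; abel
    have hsq : dist x z ^ 2 ≤ ρx ^ 2 + ρx * ρz + ρz ^ 2 := by
      rw [hdist, norm_sub_sq_real]
      nlinarith
    exact pair_to_bound hν0 hρx hρz hxz hsq
  · have hdist : dist y z = ‖b - c‖ := by
      rw [dist_eq_norm, hb2, hc2]; congr 1; abel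
    have hsq : dist y z ^ 2 ≤ ρy ^ 2 + ρy * ρz + ρz ^ 2 := by
      rw [hdist, norm_sub_sq_real]
      nlinarith
    exact pair_to_bound hν0 hρy hρz hyz hsq

end
end

section
/- If √3 − 1 < μ < 1, then for any μ-arrangement F of finitely many open circular disks in ℝ², the core C(F) is empty. -/
open Real MeasureTheory Metric Set RealInnerProductSpace

set_option maxHeartbeats 1000000

noncomputable section

def arrUnion {n : ℕ} (x : Fin n → Plane) (ρ : Fin n → ℝ) : Set Plane :=
  ⋃ i, ball (x i) (ρ i)

def angularRegion (p a b : Plane) : Set Plane :=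
  {q | ∃ s t : ℝ, 0 ≤ s ∧ 0 ≤ t ∧ q = p + s • (a - p) + t • (b - p)}

def outerShell {n : ℕ} (x : Fin n → Plane) (ρ : Fin n → ℝ) : Set Plane :=
  ⋃ i, ⋃ p ∈ frontier (arrUnion x ρ) ∩ sphere (x i) (ρ i), segment ℝ (x i) p

def IsShellTriangleVertex {n : ℕ} (x : Fin n → Plane) (ρ : Fin n → ℝ)
    (i j : Fin n) (p : Plane) : Prop :=
  i ≠ j ∧ p ∈ frontier (arrUnion x ρ) ∧ p ∈ sphere (x i) (ρ i) ∧ p ∈ sphere (x j) (ρ j) ∧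
    ¬ Collinear ℝ ({p, x i, x j} : Set Plane) ∧
    ∀ k, p ∈ sphere (x k) (ρ k) → x k ∉ interior (angularRegion p (x i) (x j))

def innerShell {n : ℕ} (x : Fin n → Plane) (ρ : Fin n → ℝ) : Set Plane :=
  ⋃ i, ⋃ j, ⋃ p ∈ {p : Plane | IsShellTriangleVertex x ρ i j p},
    convexHull ℝ ({p, x i, x j} : Set Plane)

def arrCore {n : ℕ} (x : Fin n → Plane) (ρ : Fin n → ℝ) : Set Plane :=
  arrUnion x ρ \ (innerShell x ρ ∪ outerShell x ρ)

lemma mu_quad {μ : ℝ} (hμ0 : Real.sqrt 3 - 1 < μ) : 2 < μ ^ 2 + 2 * μ := by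
  have h3 : Real.sqrt 3 ^ 2 = 3 := Real.sq_sqrt (by norm_num)
  have h0 : 0 ≤ Real.sqrt 3 := Real.sqrt_nonneg 3
  nlinarith

lemma mu_pos {μ : ℝ} (hμ0 : Real.sqrt 3 - 1 < μ) : 1 / 2 < μ := by
  have h3 : Real.sqrt 3 ^ 2 = 3 := Real.sq_sqrt (by norm_num)
  have h0 : 0 ≤ Real.sqrt 3 := Real.sqrt_nonneg 3
  nlinarith

lemma exists_pair (p q r : Plane) :
    (-(‖p‖ * ‖q‖) / 2 ≤ ⟪p, q⟫) ∨ (-(‖p‖ * ‖r‖) / 2 ≤ ⟪p, r⟫) ∨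
      (-(‖q‖ * ‖r‖) / 2 ≤ ⟪q, r⟫) := by
  by_contra h
  push_neg at h
  obtain ⟨h1, h2, h3⟩ := h
  have hp : 0 < ‖p‖ := by
    rcases eq_or_lt_of_le (norm_nonneg p) with h | h
    · exfalso; rw [← h] at h1; simp [(norm_eq_zero.mp h.symm)] at h1
    · exact h
  have hq : 0 < ‖q‖ := by
    rcases eq_or_lt_of_le (norm_nonneg q) with h | h
    · exfalso; rw [← h] at h1; simp [(norm_eq_zero.mp h.symm)] at h1
    · exact h
  have hr : 0 < ‖r‖ := by
    rcases eq_or_lt_of_le (norm_nonneg r) with h | h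
    · exfalso; rw [← h] at h2; simp [(norm_eq_zero.mp h.symm)] at h2
    · exact h
  set s := (‖q‖ * ‖r‖) • p + (‖p‖ * ‖r‖) • q + (‖p‖ * ‖q‖) • r with hs
  have hnn : 0 ≤ ⟪s, s⟫ := real_inner_self_nonneg
  have hexp : ⟪s, s⟫ = (‖q‖ * ‖r‖)^2 * ⟪p,p⟫ + (‖p‖ * ‖r‖)^2 * ⟪q,q⟫ + (‖p‖ * ‖q‖)^2 * ⟪r,r⟫
      + 2 * ((‖q‖ * ‖r‖) * (‖p‖ * ‖r‖)) * ⟪p,q⟫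
      + 2 * ((‖q‖ * ‖r‖) * (‖p‖ * ‖q‖)) * ⟪p,r⟫
      + 2 * ((‖p‖ * ‖r‖) * (‖p‖ * ‖q‖)) * ⟪q,r⟫ := by
    simp only [hs, inner_add_left, inner_add_right, real_inner_smul_left, real_inner_smul_right,
      real_inner_comm p q, real_inner_comm p r, real_inner_comm q r]
    ring
  rw [real_inner_self_eq_norm_sq p, real_inner_self_eq_norm_sq q,
    real_inner_self_eq_norm_sq r] at hexp
  nlinarith [mul_pos (mul_pos hq hr) (mul_pos hp hr), mul_pos (mul_pos hq hr) (mul_pos hp hq),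
    mul_pos (mul_pos hp hr) (mul_pos hp hq),
    mul_lt_mul_of_pos_left h1 (mul_pos (mul_pos hq hr) (mul_pos hp hr)),
    mul_lt_mul_of_pos_left h2 (mul_pos (mul_pos hq hr) (mul_pos hp hq)),
    mul_lt_mul_of_pos_left h3 (mul_pos (mul_pos hp hr) (mul_pos hp hq))]

lemma pair_far {μ a b : ℝ} (hμ : 2 < μ ^ 2 + 2 * μ) (hμp : 1 / 2 < μ) (hμ1 : μ < 1)
    (ha : 0 < a) (hb : 0 < b) {u v y : Plane}
    (hd : max a b + μ * min a b ≤ dist u v)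
    (hyu : dist y u ≤ a) (hyv : dist y v ≤ b) :
    ⟪u - y, v - y⟫ < -(‖u - y‖ * ‖v - y‖) / 2 := by
  by_contra h
  push_neg at h
  have hnp : ‖u - y‖ ≤ a := by rwa [← dist_eq_norm, dist_comm]
  have hnq : ‖v - y‖ ≤ b := by rwa [← dist_eq_norm, dist_comm]
  have hdist : dist u v ^ 2 = ‖u - y‖^2 + ‖v - y‖^2 - 2 * ⟪u - y, v - y⟫ := by
    rw [dist_eq_norm]
    have : u - v = (u - y) - (v - y) := by abel
    rw [this, @norm_sub_sq_real]
    ring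
  have hub : dist u v ^ 2 ≤ a^2 + b^2 + a * b := by
    nlinarith [mul_le_mul hnp hnq (norm_nonneg _) ha.le,
      pow_le_pow_left₀ (norm_nonneg (u - y)) hnp 2, pow_le_pow_left₀ (norm_nonneg (v - y)) hnq 2]
  rcases le_total a b with hab | hab
  · rw [max_eq_right hab, min_eq_left hab] at hd
    have h2 : (b + μ * a) ^ 2 ≤ dist u v ^ 2 :=
      pow_le_pow_left₀ (by positivity) hd 2
    nlinarith [mul_le_mul_of_nonneg_left hab (by linarith : (0:ℝ) ≤ 2 * μ - 1),
      mul_pos ha hb, sq_nonneg μ, mul_pos ha ha]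
  · rw [max_eq_left hab, min_eq_right hab] at hd
    have h2 : (a + μ * b) ^ 2 ≤ dist u v ^ 2 :=
      pow_le_pow_left₀ (by positivity) hd 2
    nlinarith [mul_le_mul_of_nonneg_left hab (by linarith : (0:ℝ) ≤ 2 * μ - 1),
      mul_pos ha hb, sq_nonneg μ, mul_pos hb hb]

lemma no_triple {μ a b c : ℝ} (hμ : 2 < μ ^ 2 + 2 * μ) (hμp : 1 / 2 < μ) (hμ1 : μ < 1)
    (ha : 0 < a) (hb : 0 < b) (hc : 0 < c) {u v w y : Plane}
    (huv : max a b + μ * min a b ≤ dist u v)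
    (huw : max a c + μ * min a c ≤ dist u w)
    (hvw : max b c + μ * min b c ≤ dist v w)
    (hyu : dist y u ≤ a) (hyv : dist y v ≤ b) (hyw : dist y w ≤ c) : False := by
  rcases exists_pair (u - y) (v - y) (w - y) with h | h | h
  · exact absurd h (not_le.mpr (pair_far hμ hμp hμ1 ha hb huv hyu hyv))
  · exact absurd h (not_le.mpr (pair_far hμ hμp hμ1 ha hc huw hyu hyw))
  · exact absurd h (not_le.mpr (pair_far hμ hμp hμ1 hb hc hvw hyv hyw))

lemma eq_of_sq_eq_sq' {x y : ℝ} (hx : 0 ≤ x) (hy : 0 ≤ y) (h : x ^ 2 = y ^ 2) : x = y := by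
  have h2 : (x - y) * (x + y) = 0 := by ring_nf; linarith
  rcases mul_eq_zero.mp h2 with h3 | h3
  · linarith
  · have hx0 : x = 0 := by linarith
    have hy0 : y = 0 := by linarith
    rw [hx0, hy0]

lemma frame (e : Plane) (he : ‖e‖ = 1) :
    ∃ f : Plane, ‖f‖ = 1 ∧ ⟪e, f⟫ = 0 ∧ ∀ v : Plane, v = ⟪v, e⟫ • e + ⟪v, f⟫ • f := by
  have hinner : ∀ x y : Plane, ⟪x, y⟫ = x 0 * y 0 + x 1 * y 1 := by
    intro x y; simp [PiLp.inner_apply, Fin.sum_univ_two]; ring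
  have he2 : e 0 ^ 2 + e 1 ^ 2 = 1 := by
    have := real_inner_self_eq_norm_sq e
    rw [he, hinner] at this; nlinarith
  obtain ⟨f, hf0, hf1⟩ : ∃ f : Plane, f 0 = -(e 1) ∧ f 1 = e 0 := ⟨WithLp.toLp 2 ![-(e 1), e 0], rfl, rfl⟩
  refine ⟨f, ?_, ?_, ?_⟩
  · have h1 : ‖f‖ ^ 2 = 1 := by
      rw [← real_inner_self_eq_norm_sq, hinner, hf0, hf1]; nlinarith
    exact eq_of_sq_eq_sq' (norm_nonneg _) one_pos.le (by rw [h1]; norm_num)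
  · rw [hinner, hf0, hf1]; ring
  · intro v
    have h0 : (⟪v, e⟫ • e + ⟪v, f⟫ • f) 0 = ⟪v, e⟫ * e 0 + ⟪v, f⟫ * f 0 := by
      simp [PiLp.add_apply, PiLp.smul_apply]
    have h1 : (⟪v, e⟫ • e + ⟪v, f⟫ • f) 1 = ⟪v, e⟫ * e 1 + ⟪v, f⟫ * f 1 := by
      simp [PiLp.add_apply, PiLp.smul_apply]
    ext i
    fin_cases i
    · show v 0 = (⟪v, e⟫ • e + ⟪v, f⟫ • f) 0
      rw [h0, hinner, hinner, hf0, hf1]; linear_combination (-(v 0)) * he2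
    · show v 1 = (⟪v, e⟫ • e + ⟪v, f⟫ • f) 1
      rw [h1, hinner, hinner, hf0, hf1]; linear_combination (-(v 1)) * he2

lemma aux_yca {yc ys a : ℝ} (h : yc^2 + ys^2 = a^2) (h0 : 0 < yc) (ha : 0 < a) : yc ≤ a := by
  nlinarith [sq_nonneg ys, (by linarith : (0:ℝ) < yc + a)]

lemma aux_ysle {ys py yc px a : ℝ} (hys2 : ys^2 = a^2 - yc^2) (hpy2 : py^2 = a^2 - px^2)
    (h : px < yc) (hys0 : 0 ≤ ys) (hpy0 : 0 < py) (hpx0 : 0 < px) : ys ≤ py := by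
  nlinarith [mul_pos (sub_pos.mpr h) (by linarith : (0:ℝ) < yc + px),
    (by linarith : (0:ℝ) < ys + py)]

lemma aux_l3 {ys py yc px : ℝ} (hysle : ys ≤ py) (hpx0 : 0 < px) (hpy0 : 0 < py)
    (hycpx : px < yc) : 0 ≤ yc * py - ys * px := by
  nlinarith [mul_le_mul_of_nonneg_right hysle (le_of_lt hpx0),
    mul_pos hpy0 (sub_pos.mpr hycpx)]

lemma aux_N {a d px yc py ys : ℝ} (hdpx : a^2 ≤ d*px) (hpx0 : 0 < px) (hpxa : px < a)
    (hda : a < d) (hycpx : px < yc) (hyca' : yc ≤ a)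
    (hys2 : ys^2 = a^2 - yc^2) (hpy2 : py^2 = a^2 - px^2)
    (hys0 : 0 ≤ ys) (hpy0 : 0 < py) : ys * (d - px) ≤ py * (d - yc) := by
  have hapx : 0 < a^2 - px^2 := by
    nlinarith [mul_pos (sub_pos.mpr hpxa) (by linarith : (0:ℝ) < a + px)]
  have hF : 0 ≤ (a^2 - px^2)*(d - yc)^2 - (a^2 - yc^2)*(d - px)^2 := by
    have hid : (a^2 - px^2)*(d - yc)^2 - (a^2 - yc^2)*(d - px)^2
        = (yc - px)*(2*(d - px)*(d*px - a^2) + (yc - px)*((d - px)^2 + (a^2 - px^2))) := by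
      ring
    rw [hid]
    apply mul_nonneg (by linarith)
    have h1 : 0 ≤ 2*(d - px)*(d*px - a^2) := mul_nonneg (by linarith) (by linarith)
    have h2 : 0 ≤ (yc - px)*((d-px)^2 + (a^2-px^2)) :=
      mul_nonneg (by linarith) (by nlinarith [sq_nonneg (d-px)])
    linarith
  have hsq : (py*(d-yc))^2 - (ys*(d-px))^2
      = (a^2 - px^2)*(d - yc)^2 - (a^2 - yc^2)*(d - px)^2 := by
    linear_combination (d-yc)^2 * hpy2 - (d-px)^2 * hys2
  have hA : 0 ≤ py*(d-yc) := mul_nonneg hpy0.le (by linarith)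
  have hB : 0 ≤ ys*(d-px) := mul_nonneg hys0 (by linarith)
  nlinarith [hsq, hF, (by linarith : (0:ℝ) ≤ py*(d-yc) + ys*(d-px))]

lemma triangle_lemma {μ a b : ℝ} (hμq : 2 < μ ^ 2 + 2 * μ) (hμp : 1 / 2 < μ) (hμ1 : μ < 1)
    (ha : 0 < a) (hb : 0 < b) {xi xj y : Plane}
    (hd : max a b + μ * min a b ≤ dist xi xj)
    (hyi : dist y xi = a) (hyj : dist y xj < b) :
    ∃ p : Plane, dist p xi = a ∧ dist p xj = b ∧
      ¬ Collinear ℝ ({p, xi, xj} : Set Plane) ∧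
      xi ∉ interior (angularRegion p xi xj) ∧ xj ∉ interior (angularRegion p xi xj) ∧
      y ∈ convexHull ℝ ({p, xi, xj} : Set Plane) := by
  set d := dist xi xj with hddef
  have hmin : 0 < min a b := lt_min ha hb
  have hda : a < d := by
    have : a ≤ max a b := le_max_left a b
    nlinarith [mul_pos (by linarith : (0:ℝ) < μ) hmin]
  have hdb : b < d := by
    have : b ≤ max a b := le_max_right a b
    nlinarith [mul_pos (by linarith : (0:ℝ) < μ) hmin]
  have hd0 : 0 < d := lt_trans ha hda
  have hdab : d < a + b := by
    have h1 : d ≤ dist xi y + dist y xj := dist_triangle xi y xj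
    rw [dist_comm xi y, hyi] at h1
    linarith
  have hd2 : a ^ 2 + b ^ 2 ≤ d ^ 2 := by
    rcases le_total a b with hab | hab
    · rw [max_eq_right hab, min_eq_left hab] at hd
      nlinarith [mul_pos ha hb, sq_nonneg (μ * a), mul_le_mul_of_nonneg_left hab
        (by linarith : (0:ℝ) ≤ 2 * μ)]
    · rw [max_eq_left hab, min_eq_right hab] at hd
      nlinarith [mul_pos ha hb, sq_nonneg (μ * b), mul_le_mul_of_nonneg_left hab
        (by linarith : (0:ℝ) ≤ 2 * μ)]
  -- the orthonormal frame
  have hxjne : xj - xi ≠ 0 := by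
    intro h
    have : xi = xj := by
      have := sub_eq_zero.mp h; exact this.symm
    rw [hddef, this, dist_self] at hd0; exact lt_irrefl _ hd0
  set e : Plane := d⁻¹ • (xj - xi) with hedef
  have hnxj : ‖xj - xi‖ = d := by rw [← dist_eq_norm, dist_comm]
  have he : ‖e‖ = 1 := by
    rw [hedef, norm_smul, hnxj, Real.norm_eq_abs, abs_of_pos (inv_pos.mpr hd0)]
    exact inv_mul_cancel₀ (ne_of_gt hd0)
  obtain ⟨f₀, hf₀n, hef₀, hdec₀⟩ := frame e he
  -- choose sign of f so that y is on the upper side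
  obtain ⟨f, hfn, hef, hdec, hys0⟩ : ∃ f : Plane, ‖f‖ = 1 ∧ ⟪e, f⟫ = 0 ∧
      (∀ v : Plane, v = ⟪v, e⟫ • e + ⟪v, f⟫ • f) ∧ 0 ≤ ⟪y - xi, f⟫ := by
    rcases le_or_gt 0 ⟪y - xi, f₀⟫ with h | h
    · exact ⟨f₀, hf₀n, hef₀, hdec₀, h⟩
    · refine ⟨-f₀, by simpa using hf₀n, by simp [hef₀], fun v => ?_, by rw [inner_neg_right]; linarith⟩
      rw [inner_neg_right, neg_smul, smul_neg, neg_neg]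
      exact hdec₀ v
  have hee : ⟪e, e⟫ = (1:ℝ) := by rw [real_inner_self_eq_norm_sq, he]; norm_num
  have hff : ⟪f, f⟫ = (1:ℝ) := by rw [real_inner_self_eq_norm_sq, hfn]; norm_num
  have hfe : ⟪f, e⟫ = (0:ℝ) := by rw [real_inner_comm]; exact hef
  have hic : ∀ s t s' t' : ℝ, ⟪s • e + t • f, s' • e + t' • f⟫ = s * s' + t * t' := by
    intro s t s' t'
    simp only [inner_add_left, inner_add_right, real_inner_smul_left, real_inner_smul_right,
      hee, hff, hef, hfe]
    ring
  have hnc : ∀ s t : ℝ, ‖s • e + t • f‖ ^ 2 = s ^ 2 + t ^ 2 := by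
    intro s t
    rw [← real_inner_self_eq_norm_sq, hic]; ring
  have hdistc : ∀ (s t : ℝ) (z : Plane), z = s • e + t • f → ‖z‖ = Real.sqrt (s^2 + t^2) := by
    intro s t z hz
    rw [hz, ← Real.sqrt_sq (norm_nonneg _), hnc]
  -- coordinates
  set px := (d^2 + a^2 - b^2) / (2*d) with hpxdef
  have hpx0 : 0 < px := by
    rw [hpxdef]
    apply div_pos (by nlinarith) (by linarith)
  have hpxa : px < a := by
    rw [hpxdef, div_lt_iff₀ (by linarith : (0:ℝ) < 2*d)]
    nlinarith
  have hdpx : a ^ 2 ≤ d * px := by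
    have h1 : d * ((d^2 + a^2 - b^2) / (2*d)) = (d^2 + a^2 - b^2)/2 := by
      field_simp
    rw [hpxdef, h1]; linarith
  set py := Real.sqrt (a^2 - px^2) with hpydef
  have hpy2 : py ^ 2 = a^2 - px^2 := Real.sq_sqrt (by nlinarith)
  have hpy0 : 0 < py := Real.sqrt_pos.mpr (by nlinarith)
  set p : Plane := xi + (px • e + py • f) with hpdef
  have hpxi : p - xi = px • e + py • f := by rw [hpdef]; abel
  have hxje : xj - xi = d • e := by
    rw [hedef, smul_smul, mul_inv_cancel₀ (ne_of_gt hd0), one_smul]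
  have hxj' : xj = xi + d • e := by rw [← hxje]; abel
  -- coordinates of y
  set yc := ⟪y - xi, e⟫ with hycdef
  set ys := ⟪y - xi, f⟫ with hysdef
  have hyxi : y - xi = yc • e + ys • f := hdec (y - xi)
  have hy' : y = xi + (yc • e + ys • f) := by rw [← hyxi]; abel
  have hyca : yc^2 + ys^2 = a^2 := by
    have h1 : ‖y - xi‖ = a := by rw [← dist_eq_norm]; exact hyi
    have h2 := hnc yc ys
    rw [← hyxi, h1] at h2
    linarith
  -- distance from p to xi and xj
  have hpxia : dist p xi = a := by
    apply eq_of_sq_eq_sq' dist_nonneg (le_of_lt ha)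
    rw [dist_eq_norm]
    have h1 : p - xi = px • e + py • f := hpxi
    rw [h1, hnc, hpy2]; ring
  have hpxjb : dist p xj = b := by
    apply eq_of_sq_eq_sq' dist_nonneg (le_of_lt hb)
    rw [dist_eq_norm]
    have h1 : p - xj = (px - d) • e + py • f := by
      rw [hpdef, hxj']; module
    rw [h1, hnc, hpy2, hpxdef]
    field_simp
    ring
  -- y is strictly inside the j-lens: yc > px
  have hycpx : px < yc := by
    have h1 : y - xj = (yc - d) • e + ys • f := by
      rw [hy', hxj']; module
    have h2 : dist y xj ^ 2 = (yc - d)^2 + ys^2 := by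
      rw [dist_eq_norm, h1, hnc]
    have h3 : (yc - d)^2 + ys^2 < b^2 := by
      rw [← h2]
      exact pow_lt_pow_left₀ hyj dist_nonneg (by norm_num)
    have h5 : 2*(d*yc) = (yc^2 + ys^2) + d^2 - ((yc - d)^2 + ys^2) := by ring
    rw [hpxdef, div_lt_iff₀ (by linarith : (0:ℝ) < 2*d)]
    linarith [h3, hyca, h5]
  have hyc0 : 0 < yc := lt_trans hpx0 hycpx
  have hys2 : ys^2 = a^2 - yc^2 := by linarith
  have hyca' : yc ≤ a := aux_yca hyca hyc0 ha
  have hysle : ys ≤ py := aux_ysle hys2 hpy2 hycpx hys0 hpy0 hpx0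
  -- the convex combination coefficients
  set l1 := ys / py with hl1def
  set l3 := (yc * py - ys * px) / (d * py) with hl3def
  have hl1 : 0 ≤ l1 := div_nonneg hys0 (le_of_lt hpy0)
  have hl3 : 0 ≤ l3 := by
    apply div_nonneg _ (le_of_lt (mul_pos hd0 hpy0))
    exact aux_l3 hysle hpx0 hpy0 hycpx
  have hl2 : 0 ≤ 1 - l1 - l3 := by
    have hN : ys * (d - px) ≤ py * (d - yc) :=
      aux_N hdpx hpx0 hpxa hda hycpx hyca' hys2 hpy2 hys0 hpy0
    have heq : 1 - l1 - l3 = (py*(d - yc) - ys*(d - px)) / (d * py) := by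
      rw [hl1def, hl3def]
      field_simp
      ring
    rw [heq]
    exact div_nonneg (by linarith) (le_of_lt (mul_pos hd0 hpy0))
  -- the convex combination identity
  have hcomb : l1 • p + (1 - l1 - l3) • xi + l3 • xj = y := by
    have hc1 : l1 * py = ys := by
      rw [hl1def]; field_simp
    have hc2 : l1 * px + l3 * d = yc := by
      rw [hl1def, hl3def]; field_simp; ring
    rw [hpdef, hxj', hy', ← hc1, ← hc2]
    module
  -- membership facts
  have hpmem : p ∈ ({p, xi, xj} : Set Plane) := mem_insert _ _
  have himem : xi ∈ ({p, xi, xj} : Set Plane) := by simp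
  have hjmem : xj ∈ ({p, xi, xj} : Set Plane) := by simp
  -- y lies in the triangle
  have hyhull : y ∈ convexHull ℝ ({p, xi, xj} : Set Plane) := by
    by_cases hT : 1 - l1 = 0
    · have hl3z : l3 = 0 := le_antisymm (by linarith) hl3
      have hl1e : l1 = 1 := by linarith
      rw [hl1e, hl3z] at hcomb
      have : p = y := by simpa using hcomb
      rw [← this]
      exact subset_convexHull ℝ _ hpmem
    · have hT0 : 0 < 1 - l1 := lt_of_le_of_ne (by linarith) (Ne.symm hT)
      set z : Plane := ((1 - l1 - l3)/(1 - l1)) • xi + (l3/(1 - l1)) • xj with hz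
      have hzseg : z ∈ segment ℝ xi xj :=
        ⟨(1 - l1 - l3)/(1 - l1), l3/(1 - l1), div_nonneg hl2 hT0.le, div_nonneg hl3 hT0.le,
          by field_simp; ring, rfl⟩
      have hzhull : z ∈ convexHull ℝ ({p, xi, xj} : Set Plane) :=
        (convex_convexHull ℝ _).segment_subset (subset_convexHull ℝ _ himem)
          (subset_convexHull ℝ _ hjmem) hzseg
      have h6 : (1 - l1) • z = (1 - l1 - l3) • xi + l3 • xj := by
        rw [hz, smul_add, smul_smul, smul_smul, mul_div_cancel₀ _ hT, mul_div_cancel₀ _ hT]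
      have hyseg : y ∈ segment ℝ p z := by
        refine ⟨l1, 1 - l1, hl1, hT0.le, by ring, ?_⟩
        rw [h6, ← hcomb]
        abel
      exact (convex_convexHull ℝ _).segment_subset (subset_convexHull ℝ _ hpmem) hzhull hyseg
  -- inner products with the frame
  have hinF : ∀ s t : ℝ, ⟪s • e + t • f, f⟫ = t := by
    intro s t
    simp only [inner_add_left, real_inner_smul_left, hef, hff, hfe]
    ring
  -- noncollinearity
  have hncol : ¬ Collinear ℝ ({p, xi, xj} : Set Plane) := by
    intro hcol
    obtain ⟨v, hv⟩ := (collinear_iff_of_mem himem).mp hcol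
    obtain ⟨rp, hrp⟩ := hv p hpmem
    obtain ⟨rj, hrj⟩ := hv xj hjmem
    have h1 : p - xi = rp • v := by rw [hrp, vadd_eq_add]; abel
    have h2 : xj - xi = rj • v := by rw [hrj, vadd_eq_add]; abel
    have h3 : ⟪p - xi, f⟫ = py := by rw [hpxi, hinF]
    have h4 : ⟪xj - xi, f⟫ = 0 := by
      have h5 : xj - xi = d • e + (0:ℝ) • f := by rw [hxje]; simp
      rw [h5, hinF]
    rw [h1, real_inner_smul_left] at h3
    rw [h2, real_inner_smul_left] at h4
    have hvf : ⟪v, f⟫ ≠ 0 := by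
      intro h
      rw [h, mul_zero] at h3
      exact (ne_of_gt hpy0) h3.symm
    have hrj0 : rj = 0 := by
      rcases mul_eq_zero.mp h4 with h | h
      · exact h
      · exact absurd h hvf
    rw [hrj0, zero_smul] at h2
    exact hxjne (by rw [sub_eq_zero] at h2 ⊢; exact h2)
  -- interior conditions
  have h2dpx : 2*(d*px) = d^2 + a^2 - b^2 := by
    rw [hpxdef]
    field_simp
  have hxi_int : xi ∉ interior (angularRegion p xi xj) := by
    intro hmem
    rw [mem_interior_iff_mem_nhds, Metric.mem_nhds_iff] at hmem
    obtain ⟨ε, hε, hball⟩ := hmem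
    set nv : Plane := py • e + (-px) • f with hnv
    have hn2 : ⟪nv, nv⟫ = a^2 := by
      rw [hnv, hic]
      linear_combination hpy2
    have hxin : ⟪xi - p, nv⟫ = 0 := by
      have hxi_p : xi - p = (-px) • e + (-py) • f := by rw [hpdef]; module
      rw [hxi_p, hnv, hic]
      ring
    have hxjn : ⟪xj - p, nv⟫ = py * d := by
      have hxj_p : xj - p = (d - px) • e + (-py) • f := by rw [hpdef, hxj']; module
      rw [hxj_p, hnv, hic]
      ring
    set zz : Plane := xi - (ε/(2*a)) • nv with hzz
    have hzball : zz ∈ ball xi ε := by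
      rw [mem_ball, dist_eq_norm]
      have h1 : zz - xi = (-(ε/(2*a)*py)) • e + (ε/(2*a)*px) • f := by
        rw [hzz, hnv]; module
      have h2 : ‖zz - xi‖ = Real.sqrt ((-(ε/(2*a)*py))^2 + (ε/(2*a)*px)^2) := hdistc _ _ _ h1
      have h3 : (-(ε/(2*a)*py))^2 + (ε/(2*a)*px)^2 = (ε/2)^2 := by
        have ha0 : a ≠ 0 := ne_of_gt ha
        have hr : (-(ε/(2*a)*py))^2 + (ε/(2*a)*px)^2 = (ε/(2*a))^2 * (py^2 + px^2) := by ring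
        have hr2 : py^2 + px^2 = a^2 := by linear_combination hpy2
        rw [hr, hr2]
        field_simp
      rw [h2, h3, Real.sqrt_sq (by positivity)]
      linarith
    obtain ⟨s, t, hs, ht, hzeq⟩ := hball hzball
    have h4 : zz - p = (xi - p) - (ε/(2*a)) • nv := by rw [hzz]; abel
    have h5 : ⟪zz - p, nv⟫ = -(ε/(2*a)) * a^2 := by
      rw [h4, inner_sub_left, hxin, real_inner_smul_left, hn2]
      ring
    have h7 : zz - p = s • (xi - p) + t • (xj - p) := by rw [hzeq]; abel
    have h8 : ⟪zz - p, nv⟫ = t * (py * d) := by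
      rw [h7, inner_add_left, real_inner_smul_left, real_inner_smul_left, hxin, hxjn]
      ring
    have h9 : 0 ≤ t * (py * d) := mul_nonneg ht (by positivity)
    have h10 : 0 < (ε/(2*a)) * a^2 := by positivity
    rw [h5] at h8
    linarith [h8.symm ▸ h9]
  have hxj_int : xj ∉ interior (angularRegion p xi xj) := by
    intro hmem
    rw [mem_interior_iff_mem_nhds, Metric.mem_nhds_iff] at hmem
    obtain ⟨ε, hε, hball⟩ := hmem
    set nv : Plane := (-py) • e + (px - d) • f with hnv
    have hn2 : ⟪nv, nv⟫ = b^2 := by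
      rw [hnv, hic]
      linear_combination hpy2 - h2dpx
    have hxjn : ⟪xj - p, nv⟫ = 0 := by
      have hxj_p : xj - p = (d - px) • e + (-py) • f := by rw [hpdef, hxj']; module
      rw [hxj_p, hnv, hic]
      ring
    have hxin : ⟪xi - p, nv⟫ = py * d := by
      have hxi_p : xi - p = (-px) • e + (-py) • f := by rw [hpdef]; module
      rw [hxi_p, hnv, hic]
      ring
    set zz : Plane := xj - (ε/(2*b)) • nv with hzz
    have hzball : zz ∈ ball xj ε := by
      rw [mem_ball, dist_eq_norm]
      have h1 : zz - xj = (ε/(2*b)*py) • e + (-(ε/(2*b)*(px - d))) • f := by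
        rw [hzz, hnv]; module
      have h2 : ‖zz - xj‖ = Real.sqrt ((ε/(2*b)*py)^2 + (-(ε/(2*b)*(px - d)))^2) := hdistc _ _ _ h1
      have h3 : (ε/(2*b)*py)^2 + (-(ε/(2*b)*(px - d)))^2 = (ε/2)^2 := by
        have hb0 : b ≠ 0 := ne_of_gt hb
        have hr : (ε/(2*b)*py)^2 + (-(ε/(2*b)*(px - d)))^2 = (ε/(2*b))^2 * (py^2 + (px - d)^2) := by
          ring
        have hr2 : py^2 + (px - d)^2 = b^2 := by linear_combination hpy2 - h2dpx
        rw [hr, hr2]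
        field_simp
      rw [h2, h3, Real.sqrt_sq (by positivity)]
      linarith
    obtain ⟨s, t, hs, ht, hzeq⟩ := hball hzball
    have h4 : zz - p = (xj - p) - (ε/(2*b)) • nv := by rw [hzz]; abel
    have h5 : ⟪zz - p, nv⟫ = -(ε/(2*b)) * b^2 := by
      rw [h4, inner_sub_left, hxjn, real_inner_smul_left, hn2]
      ring
    have h7 : zz - p = s • (xi - p) + t • (xj - p) := by rw [hzeq]; abel
    have h8 : ⟪zz - p, nv⟫ = s * (py * d) := by
      rw [h7, inner_add_left, real_inner_smul_left, real_inner_smul_left, hxin, hxjn]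
      ring
    have h9 : 0 ≤ s * (py * d) := mul_nonneg hs (by positivity)
    have h10 : 0 < (ε/(2*b)) * b^2 := by positivity
    rw [h5] at h8
    linarith [h8.symm ▸ h9]
  exact ⟨p, hpxia, hpxjb, hncol, hxi_int, hxj_int, hyhull⟩
/-- If `√3 - 1 < μ < 1`, then the core of any `μ`-arrangement of finitely
many open disks in the plane is empty. -/
theorem stmt_11 (μ : ℝ) (hμ0 : Real.sqrt 3 - 1 < μ) (hμ1 : μ < 1)
    (n : ℕ) (x : Fin n → Plane) (ρ : Fin n → ℝ) (hρ : ∀ i, 0 < ρ i)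
    (harr : ∀ i j, i ≠ j → max (ρ i) (ρ j) + μ * min (ρ i) (ρ j) ≤ dist (x i) (x j)) :
    arrCore x ρ = ∅ := by
  classical
  have hμq : 2 < μ ^ 2 + 2 * μ := mu_quad hμ0
  have hμp : 1 / 2 < μ := mu_pos hμ0
  have hopen : IsOpen (arrUnion x ρ) := isOpen_iUnion fun i => isOpen_ball
  rw [eq_empty_iff_forall_notMem]
  intro q hq
  obtain ⟨hqU, hqN⟩ := hq
  obtain ⟨i, hqi⟩ : ∃ i, q ∈ ball (x i) (ρ i) := by
    simpa [arrUnion, mem_iUnion] using hqU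
  set t := dist q (x i) with htdef
  have ht0 : 0 ≤ t := dist_nonneg
  have htlt : t < ρ i := mem_ball.mp hqi
  set u : Plane := if q = x i then EuclideanSpace.single 0 1 else (‖q - x i‖⁻¹) • (q - x i)
    with hudef
  have hu : ‖u‖ = 1 := by
    rw [hudef]
    split_ifs with h
    · simp [EuclideanSpace.norm_single]
    · rw [norm_smul, Real.norm_eq_abs, abs_of_pos
        (inv_pos.mpr (norm_pos_iff.mpr (sub_ne_zero.mpr h)))]
      exact inv_mul_cancel₀ (norm_ne_zero_iff.mpr (sub_ne_zero.mpr h))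
  have hqeq : q = x i + t • u := by
    rw [hudef]
    split_ifs with h
    · rw [h, htdef]
      simp [h]
    · rw [htdef, dist_eq_norm, smul_smul,
        mul_inv_cancel₀ (norm_ne_zero_iff.mpr (sub_ne_zero.mpr h)), one_smul]
      abel
  set yy : Plane := x i + (ρ i) • u with hyydef
  have hyd : dist yy (x i) = ρ i := by
    rw [hyydef, dist_eq_norm, add_sub_cancel_left, norm_smul, hu, Real.norm_eq_abs,
      abs_of_pos (hρ i)]
    ring
  have hseg : q ∈ segment ℝ (x i) yy := by
    refine ⟨1 - t / ρ i, t / ρ i, ?_, ?_, by ring, ?_⟩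
    · have : t / ρ i ≤ 1 := by
        rw [div_le_one (hρ i)]; linarith
      linarith
    · exact div_nonneg ht0 (hρ i).le
    · rw [hyydef, hqeq, smul_add, smul_smul, div_mul_cancel₀ _ (ne_of_gt (hρ i))]
      module
  by_cases hyU : yy ∈ arrUnion x ρ
  · -- the boundary point in direction u is covered by another disk: inner shell
    obtain ⟨j, hyj⟩ : ∃ j, yy ∈ ball (x j) (ρ j) := by
      simpa [arrUnion, mem_iUnion] using hyU
    have hij : i ≠ j := by
      intro h
      rw [← h] at hyj
      rw [mem_ball, hyd] at hyj
      exact lt_irrefl _ hyj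
    obtain ⟨p, hp_i, hp_j, hncol, hxi_int, hxj_int, hyhull⟩ :=
      triangle_lemma hμq hμp hμ1 (hρ i) (hρ j) (harr i j hij) hyd (mem_ball.mp hyj)
    have hpU : p ∉ arrUnion x ρ := by
      intro hpmem
      obtain ⟨l, hl⟩ : ∃ l, p ∈ ball (x l) (ρ l) := by
        simpa [arrUnion, mem_iUnion] using hpmem
      rw [mem_ball] at hl
      by_cases hli : l = i
      · rw [hli, hp_i] at hl; exact lt_irrefl _ hl
      · by_cases hlj : l = j
        · rw [hlj, hp_j] at hl; exact lt_irrefl _ hl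
        · exact no_triple hμq hμp hμ1 (hρ i) (hρ j) (hρ l) (harr i j hij)
            (harr i l (Ne.symm hli)) (harr j l (Ne.symm hlj))
            (le_of_eq hp_i) (le_of_eq hp_j) (le_of_lt hl)
    have hpfront : p ∈ frontier (arrUnion x ρ) := by
      rw [IsOpen.frontier_eq hopen]
      refine ⟨?_, hpU⟩
      apply closure_mono (subset_iUnion (fun i => ball (x i) (ρ i)) i)
      rw [closure_ball (x i) (ne_of_gt (hρ i))]
      exact mem_closedBall.mpr (le_of_eq hp_i)
    have hstv : IsShellTriangleVertex x ρ i j p := by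
      refine ⟨hij, hpfront, mem_sphere.mpr hp_i, mem_sphere.mpr hp_j, hncol, ?_⟩
      intro k hpk
      by_cases hki : k = i
      · rw [hki]; exact hxi_int
      · by_cases hkj : k = j
        · rw [hkj]; exact hxj_int
        · intro _
          rw [mem_sphere] at hpk
          exact no_triple hμq hμp hμ1 (hρ i) (hρ j) (hρ k) (harr i j hij)
            (harr i k (Ne.symm hki)) (harr j k (Ne.symm hkj))
            (le_of_eq hp_i) (le_of_eq hp_j) (le_of_eq hpk)
    apply hqN
    left
    have hihull : x i ∈ convexHull ℝ ({p, x i, x j} : Set Plane) :=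
      subset_convexHull ℝ _ (by simp)
    have hqhull : q ∈ convexHull ℝ ({p, x i, x j} : Set Plane) :=
      (convex_convexHull ℝ _).segment_subset hihull hyhull hseg
    simp only [innerShell, mem_iUnion, mem_setOf_eq]
    exact ⟨i, j, p, hstv, hqhull⟩
  · -- the boundary point in direction u is free: outer shell
    apply hqN
    right
    have hyfront : yy ∈ frontier (arrUnion x ρ) := by
      rw [IsOpen.frontier_eq hopen]
      refine ⟨?_, hyU⟩
      apply closure_mono (subset_iUnion (fun i => ball (x i) (ρ i)) i)
      rw [closure_ball (x i) (ne_of_gt (hρ i))]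
      exact mem_closedBall.mpr (le_of_eq hyd)
    simp only [outerShell, mem_iUnion, mem_inter_iff]
    exact ⟨i, yy, ⟨hyfront, mem_sphere.mpr hyd⟩, hseg⟩


end
end

section
/- For every μ with 0 ≤ μ ≤ √3 − 1, one has 4·arccos((1+μ)/2)/((1+μ)·√((1−μ)(3+μ))) − (7−μ)/(5+μ) > 0. -/
open Real

/-- For every `μ ∈ [0, √3 - 1]`,
`4·arccos((1+μ)/2)/((1+μ)·√((1-μ)(3+μ))) - (7-μ)/(5+μ) > 0`. -/
theorem stmt_12 (μ : ℝ) (hμ0 : 0 ≤ μ) (hμ1 : μ ≤ Real.sqrt 3 - 1) :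
    0 < 4 * Real.arccos ((1 + μ) / 2) / ((1 + μ) * Real.sqrt ((1 - μ) * (3 + μ))) -
      (7 - μ) / (5 + μ) := by
  have hs3 : Real.sqrt 3 < 1.74 := by
    rw [show (1.74 : ℝ) = Real.sqrt (1.74 ^ 2) by rw [Real.sqrt_sq]; norm_num]
    exact Real.sqrt_lt_sqrt (by norm_num) (by norm_num)
  have hμ74 : μ ≤ 0.74 := by linarith
  have h1μ : 0 < 1 - μ := by linarith
  set x : ℝ := (1 + μ) / 2 with hx
  set t : ℝ := Real.arccos x with ht
  have hx1 : x ≤ 1 := by rw [hx]; linarith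
  have hxm1 : -1 ≤ x := by rw [hx]; linarith
  have hcos : Real.cos t = x := Real.cos_arccos hxm1 hx1
  have ht0 : 0 ≤ t := Real.arccos_nonneg x
  have hlow : Real.sqrt (1 - μ) ≤ t := by
    have h := Real.one_sub_sq_div_two_le_cos (x := t)
    rw [hcos] at h
    have h2 : 1 - μ ≤ t ^ 2 := by rw [hx] at h; linarith
    calc Real.sqrt (1 - μ) ≤ Real.sqrt (t ^ 2) := Real.sqrt_le_sqrt h2
      _ = t := by rw [Real.sqrt_sq ht0]
  -- split sqrt
  have hsplit : Real.sqrt ((1 - μ) * (3 + μ)) =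
      Real.sqrt (1 - μ) * Real.sqrt (3 + μ) := Real.sqrt_mul (by linarith) _
  have hq0 : 0 < Real.sqrt (1 - μ) := Real.sqrt_pos.mpr h1μ
  have hr0 : 0 < Real.sqrt (3 + μ) := Real.sqrt_pos.mpr (by linarith)
  have hden : 0 < (1 + μ) * Real.sqrt ((1 - μ) * (3 + μ)) := by
    rw [hsplit]; positivity
  rw [sub_pos, div_lt_div_iff₀ (by linarith) hden]
  -- key polynomial inequality: (7-μ)(1+μ)√(3+μ) < 4(5+μ)
  have hkey : (7 - μ) * ((1 + μ) * Real.sqrt (3 + μ)) < 4 * (5 + μ) := by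
    have hr2 : Real.sqrt (3 + μ) ^ 2 = 3 + μ := Real.sq_sqrt (by linarith)
    nlinarith [hr0, hr2, sq_nonneg (Real.sqrt (3 + μ) - 1.94),
      sq_nonneg (μ - 0.74), mul_nonneg hμ0 hμ0,
      mul_nonneg (mul_nonneg hμ0 hμ0) hμ0]
  have hchain : (7 - μ) * ((1 + μ) * Real.sqrt ((1 - μ) * (3 + μ)))
      < 4 * Real.sqrt (1 - μ) * (5 + μ) := by
    rw [hsplit]
    calc (7 - μ) * ((1 + μ) * (Real.sqrt (1 - μ) * Real.sqrt (3 + μ)))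
        = ((7 - μ) * ((1 + μ) * Real.sqrt (3 + μ))) * Real.sqrt (1 - μ) := by ring
      _ < (4 * (5 + μ)) * Real.sqrt (1 - μ) := by
          exact mul_lt_mul_of_pos_right hkey hq0
      _ = 4 * Real.sqrt (1 - μ) * (5 + μ) := by ring
  calc (7 - μ) * ((1 + μ) * Real.sqrt ((1 - μ) * (3 + μ)))
      < 4 * Real.sqrt (1 - μ) * (5 + μ) := hchain
    _ ≤ 4 * t * (5 + μ) := by nlinarith [hlow]
end

section
/- For every μ with 0 ≤ μ ≤ √3 − 1, one has 4·arccos((1+μ)/2)/((1+μ)·√((1−μ)(3+μ))) ≤ 2π/(√3·(1+μ)²), with equality if and only if μ = √3 − 1. Equivalently, the function μ ↦ 2·arccos((1+μ)/2) − π·√((1−μ)(3+μ))/(√3·(1+μ)) is strictly increasing on [0, √3 − 1] and vanishes at μ = √3 − 1. -/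
open Real

lemma sqrt3_gt : (1:ℝ) < Real.sqrt 3 := by
  nlinarith [Real.sq_sqrt (by norm_num : (0:ℝ) ≤ 3), Real.sqrt_nonneg 3]

lemma sqrt3_lt : Real.sqrt 3 < 7/4 := by
  nlinarith [Real.sq_sqrt (by norm_num : (0:ℝ) ≤ 3), Real.sqrt_nonneg 3]

noncomputable def F : ℝ → ℝ := fun μ : ℝ => 2 * Real.arccos ((1 + μ) / 2) -
        π * Real.sqrt ((1 - μ) * (3 + μ)) / (Real.sqrt 3 * (1 + μ))

lemma hasDerivAt_F {μ : ℝ} (h0 : 0 < μ) (h1 : μ < Real.sqrt 3 - 1) :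
    HasDerivAt F
      ((2 / Real.sqrt ((1 - μ) * (3 + μ))) * (2 * π / (Real.sqrt 3 * (1 + μ) ^ 2) - 1)) μ := by
  have hs3 : Real.sqrt 3 ^ 2 = 3 := Real.sq_sqrt (by norm_num)
  have hs3p : (0:ℝ) < Real.sqrt 3 := by linarith [sqrt3_gt]
  have hμ2 : μ < 1 := by nlinarith [sqrt3_lt]
  have hμp : 0 < 1 + μ := by linarith
  have hu : 0 < (1 - μ) * (3 + μ) := by nlinarith
  have hsu : 0 < Real.sqrt ((1 - μ) * (3 + μ)) := Real.sqrt_pos.2 hu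
  have hsq : Real.sqrt ((1 - μ) * (3 + μ)) ^ 2 = (1 - μ) * (3 + μ) := Real.sq_sqrt hu.le
  have hc : HasDerivAt (fun x : ℝ => (1 + x) / 2) (1 / 2) μ := by
    simpa using ((hasDerivAt_id μ).const_add 1).div_const 2
  have hne1 : (1 + μ) / 2 ≠ 1 := by
    intro h; nlinarith [sqrt3_lt]
  have hnem1 : (1 + μ) / 2 ≠ -1 := by intro h; nlinarith
  have hA : HasDerivAt (fun x : ℝ => Real.arccos ((1 + x) / 2))
      (-(1 / Real.sqrt (1 - ((1 + μ) / 2) ^ 2)) * (1 / 2)) μ :=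
    by have := (Real.hasDerivAt_arccos hnem1 hne1).comp μ hc; exact this
  have hP : HasDerivAt (fun x : ℝ => (1 - x) * (3 + x)) (-2 - 2 * μ) μ := by
    have := (((hasDerivAt_id μ).const_sub 1).mul ((hasDerivAt_id μ).const_add 3))
    exact this.congr_deriv (by simp only [id_eq]; ring)
  have hS : HasDerivAt (fun x : ℝ => Real.sqrt ((1 - x) * (3 + x)))
      (1 / (2 * Real.sqrt ((1 - μ) * (3 + μ))) * (-2 - 2 * μ)) μ :=
    (Real.hasDerivAt_sqrt hu.ne').comp μ hP
  have hD : HasDerivAt (fun x : ℝ => Real.sqrt 3 * (1 + x)) (Real.sqrt 3) μ := by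
    simpa using ((hasDerivAt_id μ).const_add 1).const_mul (Real.sqrt 3)
  have hDne : Real.sqrt 3 * (1 + μ) ≠ 0 := by positivity
  have hQ : HasDerivAt
      (fun x : ℝ => π * Real.sqrt ((1 - x) * (3 + x)) / (Real.sqrt 3 * (1 + x)))
      ((π * (1 / (2 * Real.sqrt ((1 - μ) * (3 + μ))) * (-2 - 2 * μ)) * (Real.sqrt 3 * (1 + μ)) -
          π * Real.sqrt ((1 - μ) * (3 + μ)) * Real.sqrt 3) / (Real.sqrt 3 * (1 + μ)) ^ 2) μ :=
    (hS.const_mul π).div hD hDne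
  have hF : HasDerivAt F
      (2 * (-(1 / Real.sqrt (1 - ((1 + μ) / 2) ^ 2)) * (1 / 2)) -
        (π * (1 / (2 * Real.sqrt ((1 - μ) * (3 + μ))) * (-2 - 2 * μ)) * (Real.sqrt 3 * (1 + μ)) -
          π * Real.sqrt ((1 - μ) * (3 + μ)) * Real.sqrt 3) / (Real.sqrt 3 * (1 + μ)) ^ 2) μ :=
    (hA.const_mul 2).sub hQ
  convert hF using 1
  have e2 : Real.sqrt (1 - ((1 + μ) / 2) ^ 2) = Real.sqrt ((1 - μ) * (3 + μ)) / 2 := by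
    rw [show 1 - ((1 + μ) / 2) ^ 2 = ((1 - μ) * (3 + μ)) / 4 by ring,
      Real.sqrt_div hu.le, show Real.sqrt 4 = 2 by
        rw [show (4:ℝ) = 2 ^ 2 by norm_num]; exact Real.sqrt_sq (by norm_num)]
  rw [e2]
  set s := Real.sqrt ((1 - μ) * (3 + μ)) with hsdef
  set r := Real.sqrt 3 with hrdef
  have hsne : s ≠ 0 := ne_of_gt hsu
  have hrne : r ≠ 0 := ne_of_gt hs3p
  have htne : (1:ℝ) + μ ≠ 0 := ne_of_gt hμp
  have hkey : s ^ 2 = 4 - (1 + μ) ^ 2 := by rw [hsq]; ring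
  have hnum : π * (1 / (2 * s) * (-2 - 2 * μ)) * (r * (1 + μ)) - π * s * r
      = -(4 * π * r) / s := by
    field_simp
    linear_combination (-1 : ℝ) * hkey
  rw [hnum]
  field_simp
  ring

lemma F_mono : StrictMonoOn F (Set.Icc 0 (Real.sqrt 3 - 1)) := by
  have hs3 : Real.sqrt 3 ^ 2 = 3 := Real.sq_sqrt (by norm_num)
  apply strictMonoOn_of_deriv_pos (convex_Icc _ _)
  · apply ContinuousOn.sub
    · exact (continuous_const.mul (Real.continuous_arccos.comp
        (by continuity))).continuousOn
    · apply ContinuousOn.div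
      · exact (continuous_const.mul ((Real.continuous_sqrt).comp
          (by continuity))).continuousOn
      · exact (continuous_const.mul (by continuity)).continuousOn
      · intro x hx
        have : (0:ℝ) < 1 + x := by linarith [hx.1]
        positivity
  · intro x hx
    rw [interior_Icc] at hx
    rw [(hasDerivAt_F hx.1 hx.2).deriv]
    have hx2 : x < 1 := by nlinarith [sqrt3_lt, hx.2]
    have hxp : (0:ℝ) < 1 + x := by linarith [hx.1]
    have hu : 0 < (1 - x) * (3 + x) := by nlinarith
    have hsu : 0 < Real.sqrt ((1 - x) * (3 + x)) := Real.sqrt_pos.2 hu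
    have h2 : Real.sqrt 3 * (1 + x) ^ 2 < 2 * π := by
      nlinarith [Real.pi_gt_three, sqrt3_lt, hx.2, hx.1, Real.sqrt_nonneg 3]
    have h3 : (0:ℝ) < Real.sqrt 3 * (1 + x) ^ 2 := by positivity
    have : (1:ℝ) < 2 * π / (Real.sqrt 3 * (1 + x) ^ 2) := by
      rw [lt_div_iff₀ h3]; linarith
    have h4 : 0 < 2 / Real.sqrt ((1 - x) * (3 + x)) := by positivity
    nlinarith

lemma F_val : F (Real.sqrt 3 - 1) = 0 := by
  have hs3 : Real.sqrt 3 ^ 2 = 3 := Real.sq_sqrt (by norm_num)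
  have hs3p : (0:ℝ) < Real.sqrt 3 := by linarith [sqrt3_gt]
  show 2 * Real.arccos ((1 + (Real.sqrt 3 - 1)) / 2) -
      π * Real.sqrt ((1 - (Real.sqrt 3 - 1)) * (3 + (Real.sqrt 3 - 1))) /
        (Real.sqrt 3 * (1 + (Real.sqrt 3 - 1))) = 0
  have e1 : 1 + (Real.sqrt 3 - 1) = Real.sqrt 3 := by ring
  rw [e1]
  have e2 : (1 - (Real.sqrt 3 - 1)) * (3 + (Real.sqrt 3 - 1)) = 1 := by
    linear_combination -hs3
  rw [e2, Real.sqrt_one]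
  have e3 : Real.arccos (Real.sqrt 3 / 2) = π / 6 := by
    rw [show Real.sqrt 3 / 2 = Real.cos (π / 6) from (Real.cos_pi_div_six).symm]
    exact Real.arccos_cos (by positivity) (by linarith [Real.pi_pos])
  rw [e3]
  have e4 : Real.sqrt 3 * Real.sqrt 3 = 3 := by nlinarith
  field_simp
  simp only [hs3]; ring

lemma F_nonpos {μ : ℝ} (h0 : 0 ≤ μ) (h1 : μ ≤ Real.sqrt 3 - 1) :
    F μ ≤ 0 ∧ (F μ = 0 ↔ μ = Real.sqrt 3 - 1) := by
  rcases eq_or_lt_of_le h1 with h | h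
  · subst h; simp [F_val]
  · have hlt : F μ < 0 := by
      have := F_mono ⟨h0, h1⟩ ⟨by linarith [sqrt3_gt], le_refl _⟩ h
      rw [F_val] at this; exact this
    exact ⟨hlt.le, by constructor <;> intro hh <;> [exact absurd hh hlt.ne; exact absurd hh h.ne]⟩

/-- For every `μ ∈ [0, √3 - 1]`,
`4·arccos((1+μ)/2)/((1+μ)·√((1-μ)(3+μ))) ≤ 2π/(√3·(1+μ)²)`, with equality iff
`μ = √3 - 1`; equivalently, `μ ↦ 2·arccos((1+μ)/2) - π·√((1-μ)(3+μ))/(√3·(1+μ))` is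
strictly increasing on `[0, √3 - 1]` and vanishes at `μ = √3 - 1`. -/
theorem stmt_13 :
    (∀ μ : ℝ, 0 ≤ μ → μ ≤ Real.sqrt 3 - 1 →
      (4 * Real.arccos ((1 + μ) / 2) / ((1 + μ) * Real.sqrt ((1 - μ) * (3 + μ))) ≤
          2 * π / (Real.sqrt 3 * (1 + μ) ^ 2) ∧
        (4 * Real.arccos ((1 + μ) / 2) / ((1 + μ) * Real.sqrt ((1 - μ) * (3 + μ))) =
            2 * π / (Real.sqrt 3 * (1 + μ) ^ 2) ↔ μ = Real.sqrt 3 - 1))) ∧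
    StrictMonoOn
      (fun μ : ℝ => 2 * Real.arccos ((1 + μ) / 2) -
        π * Real.sqrt ((1 - μ) * (3 + μ)) / (Real.sqrt 3 * (1 + μ)))
      (Set.Icc 0 (Real.sqrt 3 - 1)) ∧
    2 * Real.arccos ((1 + (Real.sqrt 3 - 1)) / 2) -
        π * Real.sqrt ((1 - (Real.sqrt 3 - 1)) * (3 + (Real.sqrt 3 - 1))) /
          (Real.sqrt 3 * (1 + (Real.sqrt 3 - 1))) = 0 := by
  refine ⟨?_, F_mono, F_val⟩
  intro μ h0 h1
  have hs3p : (0:ℝ) < Real.sqrt 3 := by linarith [sqrt3_gt]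
  have hμ2 : μ < 1 := by nlinarith [sqrt3_lt]
  have hμp : 0 < 1 + μ := by linarith
  have hu : 0 < (1 - μ) * (3 + μ) := by nlinarith
  have hsu : 0 < Real.sqrt ((1 - μ) * (3 + μ)) := Real.sqrt_pos.2 hu
  set s := Real.sqrt ((1 - μ) * (3 + μ)) with hsdef
  have hdiff : 4 * Real.arccos ((1 + μ) / 2) / ((1 + μ) * s) -
      2 * π / (Real.sqrt 3 * (1 + μ) ^ 2) = 2 * F μ / ((1 + μ) * s) := by
    show _ = 2 * (2 * Real.arccos ((1 + μ) / 2) -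
        π * s / (Real.sqrt 3 * (1 + μ))) / ((1 + μ) * s)
    field_simp
    ring
  obtain ⟨hle, hiff⟩ := F_nonpos h0 h1
  have hdp : (0:ℝ) < (1 + μ) * s := by positivity
  constructor
  · have : 2 * F μ / ((1 + μ) * s) ≤ 0 :=
      div_nonpos_of_nonpos_of_nonneg (by linarith) hdp.le
    linarith [hdiff, this]
  · rw [← sub_eq_zero, hdiff, div_eq_zero_iff]
    constructor
    · rintro (h | h)
      · exact hiff.1 (by linarith)
      · exact absurd h hdp.ne'
    · intro h
      exact Or.inl (by have := hiff.2 h; linarith)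
end

section
/- Let T = [x, y, z] and T' = [x', y', z'] be triangles in ℝ² such that |u' − v'| ≤ |u − v| for every pair of corresponding vertices u, v ∈ {x, y, z} (i.e., |x'−y'| ≤ |x−y|, |x'−z'| ≤ |x−z|, |y'−z'| ≤ |y−z|). Then for every point q ∈ T there is a point q' ∈ T' such that |q' − u'| ≤ |q − u| for every u ∈ {x, y, z} (with u' the corresponding vertex of T'). -/
open Real Set
open scoped RealInnerProductSpace

noncomputable section

variable {E : Type*} [NormedAddCommGroup E] [InnerProductSpace ℝ E]

lemma expand3 (c₁ c₂ c₃ : E) (l₁ l₂ l₃ : ℝ) :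
    ‖l₁•c₁+l₂•c₂+l₃•c₃‖^2 = l₁^2*‖c₁‖^2+l₂^2*‖c₂‖^2+l₃^2*‖c₃‖^2
      + 2*(l₁*l₂*⟪c₁,c₂⟫ + l₁*l₃*⟪c₁,c₃⟫ + l₂*l₃*⟪c₂,c₃⟫) := by
  rw [← real_inner_self_eq_norm_sq, ← real_inner_self_eq_norm_sq,
    ← real_inner_self_eq_norm_sq, ← real_inner_self_eq_norm_sq]
  simp only [inner_add_left, inner_add_right, real_inner_smul_left, real_inner_smul_right,
    real_inner_comm c₂ c₁, real_inner_comm c₃ c₁, real_inner_comm c₃ c₂]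
  ring

/-- The dual objective. -/
def Gfun (a b c : E) (ra rb rc α β γ : ℝ) : ℝ :=
  α*(‖a‖^2 - ra^2) + β*(‖b‖^2 - rb^2) + γ*(‖c‖^2 - rc^2) - ‖α•a+β•b+γ•c‖^2

lemma Gfun_swap12 (a b c : E) (ra rb rc α β γ : ℝ) :
    Gfun b a c rb ra rc β α γ = Gfun a b c ra rb rc α β γ := by
  unfold Gfun
  rw [show β•b+α•a+γ•c = α•a+β•b+γ•c from by module]
  ring

lemma Gfun_rot (a b c : E) (ra rb rc α β γ : ℝ) :
    Gfun c a b rc ra rb γ α β = Gfun a b c ra rb rc α β γ := by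
  unfold Gfun
  rw [show γ•c+α•a+β•b = α•a+β•b+γ•c from by module]
  ring

/-- Key directional-derivative step: at a maximizer of `Gfun` over the simplex with
nonpositive value, the barycenter is within distance `ra` of `a`. -/
lemma step (a b c : E) (ra rb rc α β γ : ℝ)
    (hra : 0 ≤ ra) (hsum : α + β + γ = 1)
    (hG0 : Gfun a b c ra rb rc α β γ ≤ 0)
    (hmax : ∀ t ∈ Icc (0:ℝ) 1,
      Gfun a b c ra rb rc ((1-t)*α+t) ((1-t)*β) ((1-t)*γ) ≤ Gfun a b c ra rb rc α β γ) :
    ‖(α•a+β•b+γ•c) - a‖ ≤ ra := by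
  obtain rfl : γ = 1 - α - β := by linarith
  have hCrw : ‖(α•a+β•b+(1-α-β)•c) - a‖^2 = ‖(α-1)•a + β•b + (1-α-β)•c‖^2 := by
    rw [show (α•a+β•b+(1-α-β)•c) - a = (α-1)•a + β•b + (1-α-β)•c from by module]
  have key : ∀ t : ℝ, Gfun a b c ra rb rc ((1-t)*α+t) ((1-t)*β) ((1-t)*(1-α-β))
      = Gfun a b c ra rb rc α β (1-α-β)
        + t*((‖(α•a+β•b+(1-α-β)•c) - a‖^2 - ra^2) - Gfun a b c ra rb rc α β (1-α-β))
        - t^2*‖(α•a+β•b+(1-α-β)•c) - a‖^2 := by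
    intro t
    rw [hCrw]
    unfold Gfun
    rw [expand3, expand3, expand3]
    ring
  set G := Gfun a b c ra rb rc α β (1-α-β) with hG
  set C : ℝ := ‖(α•a+β•b+(1-α-β)•c) - a‖^2 with hC
  have hC0 : 0 ≤ C := by rw [hC]; positivity
  -- deduce C - ra^2 ≤ G
  have hhG : C - ra^2 ≤ G := by
    by_contra hcon
    push_neg at hcon
    set h : ℝ := C - ra^2 with hh
    set t : ℝ := min 1 ((h - G)/(2*(C+1))) with ht
    have ht0 : 0 < t := by
      apply lt_min one_pos
      apply div_pos (by linarith) (by linarith)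
    have ht1 : t ≤ 1 := min_le_left _ _
    have hm := hmax t ⟨le_of_lt ht0, ht1⟩
    rw [key t] at hm
    have h1 : h - G ≤ t*C := by
      have h0 : t*(h-G) ≤ t*(t*C) := by nlinarith
      have := mul_le_mul_of_nonneg_left h0 (le_of_lt (inv_pos.mpr ht0))
      calc h - G = t⁻¹ * (t*(h-G)) := by field_simp
        _ ≤ t⁻¹ * (t*(t*C)) := this
        _ = t*C := by field_simp
    have h2 : t*C ≤ (h - G)/(2*(C+1))*C :=
      mul_le_mul_of_nonneg_right (min_le_right _ _) hC0
    have h3 : (h - G)/(2*(C+1))*C < h - G := by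
      rw [div_mul_eq_mul_div, div_lt_iff₀ (by linarith)]
      nlinarith
    linarith
  have hsq : C ≤ ra^2 := by linarith
  rw [hC] at hsq
  nlinarith [norm_nonneg ((α•a+β•b+(1-α-β)•c) - a)]

/-- Quadratic identity: `Σλᵢ‖cᵢ‖² − ‖Σλᵢcᵢ‖² = Σ_{i<j} λᵢλⱼ‖cᵢ−cⱼ‖²` when `Σλ = 1`. -/
lemma idQ (c₁ c₂ c₃ : E) (α β γ : ℝ) (hsum : α + β + γ = 1) :
    α*‖c₁‖^2 + β*‖c₂‖^2 + γ*‖c₃‖^2 - ‖α•c₁+β•c₂+γ•c₃‖^2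
      = α*β*‖c₁-c₂‖^2 + α*γ*‖c₁-c₃‖^2 + β*γ*‖c₂-c₃‖^2 := by
  obtain rfl : γ = 1 - α - β := by linarith
  rw [expand3, norm_sub_sq_real, norm_sub_sq_real, norm_sub_sq_real]
  ring

lemma G_nonpos (u₁ u₂ u₃ q a b c : E) (α β γ : ℝ)
    (hα : 0 ≤ α) (hβ : 0 ≤ β) (hγ : 0 ≤ γ) (hsum : α + β + γ = 1)
    (h12 : dist a b ≤ dist u₁ u₂) (h13 : dist a c ≤ dist u₁ u₃)
    (h23 : dist b c ≤ dist u₂ u₃) :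
    Gfun a b c (dist q u₁) (dist q u₂) (dist q u₃) α β γ ≤ 0 := by
  have e1 : Gfun a b c (dist q u₁) (dist q u₂) (dist q u₃) α β γ
      = α*β*‖a-b‖^2 + α*γ*‖a-c‖^2 + β*γ*‖b-c‖^2
        - (α*(dist q u₁)^2 + β*(dist q u₂)^2 + γ*(dist q u₃)^2) := by
    unfold Gfun
    rw [← idQ a b c α β γ hsum]
    ring
  have e2 : α*β*‖(u₁-q)-(u₂-q)‖^2 + α*γ*‖(u₁-q)-(u₃-q)‖^2 + β*γ*‖(u₂-q)-(u₃-q)‖^2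
      - (α*(dist q u₁)^2 + β*(dist q u₂)^2 + γ*(dist q u₃)^2)
      = - ‖α•(u₁-q)+β•(u₂-q)+γ•(u₃-q)‖^2 := by
    have := idQ (u₁-q) (u₂-q) (u₃-q) α β γ hsum
    have n1 : ‖u₁-q‖ = dist q u₁ := by rw [dist_comm, dist_eq_norm]
    have n2 : ‖u₂-q‖ = dist q u₂ := by rw [dist_comm, dist_eq_norm]
    have n3 : ‖u₃-q‖ = dist q u₃ := by rw [dist_comm, dist_eq_norm]
    rw [n1, n2, n3] at this
    linarith
  have d12 : ‖a-b‖^2 ≤ ‖(u₁-q)-(u₂-q)‖^2 := by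
    rw [show (u₁-q)-(u₂-q) = u₁-u₂ from by abel]
    rw [← dist_eq_norm, ← dist_eq_norm]
    nlinarith [dist_nonneg (x := a) (y := b), dist_nonneg (x := u₁) (y := u₂)]
  have d13 : ‖a-c‖^2 ≤ ‖(u₁-q)-(u₃-q)‖^2 := by
    rw [show (u₁-q)-(u₃-q) = u₁-u₃ from by abel]
    rw [← dist_eq_norm, ← dist_eq_norm]
    nlinarith [dist_nonneg (x := a) (y := c), dist_nonneg (x := u₁) (y := u₃)]
  have d23 : ‖b-c‖^2 ≤ ‖(u₂-q)-(u₃-q)‖^2 := by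
    rw [show (u₂-q)-(u₃-q) = u₂-u₃ from by abel]
    rw [← dist_eq_norm, ← dist_eq_norm]
    nlinarith [dist_nonneg (x := b) (y := c), dist_nonneg (x := u₂) (y := u₃)]
  have hn : 0 ≤ ‖α•(u₁-q)+β•(u₂-q)+γ•(u₃-q)‖^2 := by positivity
  rw [e1]
  nlinarith [mul_le_mul_of_nonneg_left d12 (mul_nonneg hα hβ),
    mul_le_mul_of_nonneg_left d13 (mul_nonneg hα hγ),
    mul_le_mul_of_nonneg_left d23 (mul_nonneg hβ hγ)]

/-- If the triangles `T = [x, y, z]` and `T' = [x', y', z']` satisfy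
`|u' - v'| ≤ |u - v|` for every pair of corresponding vertices, then for every `q ∈ T`
there is `q' ∈ T'` with `|q' - u'| ≤ |q - u|` for every vertex `u`. -/
theorem stmt_15 (x y z x' y' z' : Plane)
    (hT : ¬ Collinear ℝ ({x, y, z} : Set Plane))
    (hT' : ¬ Collinear ℝ ({x', y', z'} : Set Plane))
    (hxy : dist x' y' ≤ dist x y) (hxz : dist x' z' ≤ dist x z)
    (hyz : dist y' z' ≤ dist y z) :
    ∀ q ∈ convexHull ℝ ({x, y, z} : Set Plane),
      ∃ q' ∈ convexHull ℝ ({x', y', z'} : Set Plane),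
        dist q' x' ≤ dist q x ∧ dist q' y' ≤ dist q y ∧ dist q' z' ≤ dist q z := by
  intro q _
  set ra := dist q x with hra
  set rb := dist q y with hrb
  set rc := dist q z with hrc
  set g : ℝ × ℝ → ℝ := fun v => Gfun x' y' z' ra rb rc v.1 v.2 (1-v.1-v.2) with hg
  set S : Set (ℝ × ℝ) := {v | 0 ≤ v.1 ∧ 0 ≤ v.2 ∧ v.1 + v.2 ≤ 1} with hS
  have hSeq : S = {v : ℝ×ℝ | 0 ≤ v.1} ∩ ({v | 0 ≤ v.2} ∩ {v | v.1 + v.2 ≤ 1}) := by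
    ext v; simp [hS, Set.mem_inter_iff, and_assoc]
  have hSclosed : IsClosed S := by
    rw [hSeq]
    exact (isClosed_le continuous_const continuous_fst).inter
      ((isClosed_le continuous_const continuous_snd).inter
        (isClosed_le (continuous_fst.add continuous_snd) continuous_const))
  have hScomp : IsCompact S := by
    apply (isCompact_Icc (a := ((0:ℝ),(0:ℝ))) (b := (1,1))).of_isClosed_subset hSclosed
    rintro ⟨v1, v2⟩ ⟨h1, h2, h3⟩
    exact ⟨⟨h1, h2⟩, ⟨by dsimp at *; linarith, by dsimp at *; linarith⟩⟩
  have hgcont : Continuous g := by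
    rw [hg]; unfold Gfun
    fun_prop
  obtain ⟨v, hvS, hvmax⟩ := hScomp.exists_isMaxOn ⟨(0,0), by simp [hS]⟩ hgcont.continuousOn
  obtain ⟨hα, hβ, hαβ⟩ := hvS
  set α := v.1 with hav
  set β := v.2 with hbv
  set γ : ℝ := 1 - α - β with hγ
  have hγ0 : 0 ≤ γ := by rw [hγ]; linarith
  have hsum : α + β + γ = 1 := by rw [hγ]; ring
  have hgv : g v = Gfun x' y' z' ra rb rc α β γ := by rw [hg]
  have hG0 : Gfun x' y' z' ra rb rc α β γ ≤ 0 :=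
    G_nonpos x y z q x' y' z' α β γ hα hβ hγ0 hsum hxy hxz hyz
  -- the three maximality statements
  have hmax1 : ∀ t ∈ Icc (0:ℝ) 1,
      Gfun x' y' z' ra rb rc ((1-t)*α+t) ((1-t)*β) ((1-t)*γ)
        ≤ Gfun x' y' z' ra rb rc α β γ := by
    intro t ⟨ht0, ht1⟩
    have hw : (((1-t)*α+t, (1-t)*β) : ℝ×ℝ) ∈ S := by
      refine ⟨by dsimp; nlinarith, by dsimp; nlinarith, by dsimp; nlinarith⟩
    have h := isMaxOn_iff.mp hvmax _ hw
    rw [hgv] at h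
    have e : (1:ℝ) - ((1-t)*α+t) - ((1-t)*β) = (1-t)*γ := by rw [hγ]; ring
    rw [hg] at h; dsimp at h; rw [e] at h
    exact h
  have hmax2 : ∀ t ∈ Icc (0:ℝ) 1,
      Gfun y' x' z' rb ra rc ((1-t)*β+t) ((1-t)*α) ((1-t)*γ)
        ≤ Gfun y' x' z' rb ra rc β α γ := by
    intro t ⟨ht0, ht1⟩
    rw [Gfun_swap12 x' y' z' ra rb rc ((1-t)*α) ((1-t)*β+t) ((1-t)*γ),
      Gfun_swap12 x' y' z' ra rb rc α β γ]
    have hw : (((1-t)*α, (1-t)*β+t) : ℝ×ℝ) ∈ S := by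
      refine ⟨by dsimp; nlinarith, by dsimp; nlinarith, by dsimp; nlinarith⟩
    have h := isMaxOn_iff.mp hvmax _ hw
    rw [hgv] at h
    have e : (1:ℝ) - ((1-t)*α) - ((1-t)*β+t) = (1-t)*γ := by rw [hγ]; ring
    rw [hg] at h; dsimp at h; rw [e] at h
    exact h
  have hmax3 : ∀ t ∈ Icc (0:ℝ) 1,
      Gfun z' x' y' rc ra rb ((1-t)*γ+t) ((1-t)*α) ((1-t)*β)
        ≤ Gfun z' x' y' rc ra rb γ α β := by
    intro t ⟨ht0, ht1⟩
    rw [Gfun_rot x' y' z' ra rb rc ((1-t)*α) ((1-t)*β) ((1-t)*γ+t),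
      Gfun_rot x' y' z' ra rb rc α β γ]
    have hw : (((1-t)*α, (1-t)*β) : ℝ×ℝ) ∈ S := by
      refine ⟨by dsimp; nlinarith, by dsimp; nlinarith, by dsimp; nlinarith⟩
    have h := isMaxOn_iff.mp hvmax _ hw
    rw [hgv] at h
    have e : (1:ℝ) - ((1-t)*α) - ((1-t)*β) = (1-t)*γ+t := by rw [hγ]; ring
    rw [hg] at h; dsimp at h; rw [e] at h
    exact h
  -- apply the step lemma three times
  have s1 : ‖(α•x'+β•y'+γ•z') - x'‖ ≤ ra :=
    step x' y' z' ra rb rc α β γ dist_nonneg hsum hG0 hmax1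
  have s2 : ‖(β•y'+α•x'+γ•z') - y'‖ ≤ rb := by
    refine step y' x' z' rb ra rc β α γ dist_nonneg (by linarith) ?_ hmax2
    rw [Gfun_swap12]; exact hG0
  have s3 : ‖(γ•z'+α•x'+β•y') - z'‖ ≤ rc := by
    refine step z' x' y' rc ra rb γ α β dist_nonneg (by linarith) ?_ hmax3
    rw [Gfun_rot]; exact hG0
  refine ⟨α•x'+β•y'+γ•z', ?_, ?_, ?_, ?_⟩
  · have hconv := convex_convexHull ℝ ({x',y',z'} : Set Plane)
    have hsub := subset_convexHull ℝ ({x',y',z'} : Set Plane)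
    have hmem : (∑ i : Fin 3, (![α,β,γ] i) • (![x',y',z'] i))
        ∈ convexHull ℝ ({x',y',z'} : Set Plane) := by
      refine hconv.sum_mem ?_ ?_ ?_
      · intro i _; fin_cases i <;> simpa
      · simp [Fin.sum_univ_three, hsum]
      · intro i _
        fin_cases i <;> [exact hsub (by simp); exact hsub (by simp); exact hsub (by simp)]
    simpa [Fin.sum_univ_three] using hmem
  · rw [dist_eq_norm]; exact s1
  · rw [dist_eq_norm, show (α•x'+β•y'+γ•z') - y' = (β•y'+α•x'+γ•z') - y' from by module]
    exact s2
  · rw [dist_eq_norm, show (α•x'+β•y'+γ•z') - z' = (γ•z'+α•x'+β•y') - z' from by module]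
    exact s3

end
end

section
/- Let F be a Minkowski arrangement of open circular disks in ℝ², i.e., a family {B_i = x_i + ρ_i int(B²)} with |x_i − x_j| ≥ max{ρ_i, ρ_j} for all i ≠ j. Suppose B_1 ∩ B_2 is a digon with vertices q and q', and B_3 is a member of F with q ∈ B_3 and q' ∈ B_3. Then B_1 ∩ B_2 ⊆ B_3. -/
open Real Metric Set

noncomputable section

private lemma lag (w0 w1 u0 u1 : ℝ) :
    (w0^2 + w1^2) * (u0^2 + u1^2) = (u0*w0 + u1*w1)^2 + (w0*u1 - w1*u0)^2 := by ring


private lemma mul_nn (a b : ℝ) (ha : a ≤ 0) (hb : b ≤ 0) : 0 ≤ a * b := by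
  have := mul_nonneg (neg_nonneg.2 ha) (neg_nonneg.2 hb)
  nlinarith [this]

private lemma mul_np (a b : ℝ) (ha : a ≤ 0) (hb : 0 ≤ b) : a * b ≤ 0 := by
  have := mul_nonneg (neg_nonneg.2 ha) hb
  nlinarith [this]

private lemma mul_pn (a b : ℝ) (ha : 0 ≤ a) (hb : b ≤ 0) : a * b ≤ 0 := by
  have := mul_nonneg ha (neg_nonneg.2 hb)
  nlinarith [this]

private lemma endgame (L C D S T R M : ℝ) (hL : 0 < L)
    (hk : C^2 + D^2 < R) (hk' : (C - L)^2 + D^2 < R)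
    (hF : S^2 - L*S + T^2 - 2*M*T < 0)
    (hMT : 0 ≤ (D - M) * T) (hMT' : M * T ≤ 0) :
    (S - C)^2 + (T - D)^2 < R := by
  have hSS : S^2 - L*S < 0 := by linarith [sq_nonneg T]
  have hS0 : 0 ≤ S := by
    by_contra h
    push_neg at h
    have h2 : 0 < L * (-S) := mul_pos hL (by linarith)
    have h3 : 0 ≤ S^2 := sq_nonneg S
    linarith
  have hSL : S ≤ L := by
    by_contra h
    push_neg at h
    have hS : 0 < S := lt_trans hL h
    have h2 : L * S < S * S := mul_lt_mul_of_pos_right h hS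
    linarith [hSS, h2]
  have t1 : 0 ≤ (L - S) * (R - C^2 - D^2) := mul_nonneg (by linarith) (by linarith)
  have t2 : 0 ≤ S * (R - (C - L)^2 - D^2) := mul_nonneg hS0 (by linarith)
  have m1 : L * (S^2 - L*S + T^2 - 2*M*T) < 0 := mul_neg_of_pos_of_neg hL hF
  have m2 : 0 ≤ L * ((D - M) * T) := mul_nonneg hL.le hMT
  have key : L * ((S - C)^2 + (T - D)^2 - R)
      = L * (S^2 - L*S + T^2 - 2*M*T) - 2 * (L * ((D - M) * T))
        - (L - S) * (R - C^2 - D^2) - S * (R - (C - L)^2 - D^2) := by ring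
  have hneg : L * ((S - C)^2 + (T - D)^2 - R) < 0 := by rw [key]; linarith
  by_contra h
  push_neg at h
  have : 0 ≤ L * ((S - C)^2 + (T - D)^2 - R) := mul_nonneg hL.le (by linarith)
  linarith

set_option maxHeartbeats 2000000 in
private lemma core (L si sj A B C D S T Ri Rj R : ℝ) (hL : 0 < L)
    (Ei : si^2 + A^2 = Ri) (Ei' : (si - L)^2 + A^2 = Ri)
    (Ej : sj^2 + B^2 = Rj) (Ej' : (sj - L)^2 + B^2 = Rj)
    (hiji : Ri ≤ (si - sj)^2 + (A - B)^2) (hijj : Rj ≤ (si - sj)^2 + (A - B)^2)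
    (hk : C^2 + D^2 < R) (hk' : (C - L)^2 + D^2 < R)
    (hik : R ≤ (C - si)^2 + (D - A)^2) (hjk : R ≤ (C - sj)^2 + (D - B)^2)
    (hpi : (S - si)^2 + (T - A)^2 < Ri) (hpj : (S - sj)^2 + (T - B)^2 < Rj) :
    (S - C)^2 + (T - D)^2 < R := by
  have hL2 : 0 < L * L := mul_pos hL hL
  have hsi : si = L / 2 := by
    have h : L * (2 * si - L) = 0 := by linear_combination Ei - Ei'
    rcases mul_eq_zero.mp h with h | h
    · linarith
    · linarith
  have hsj : sj = L / 2 := by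
    have h : L * (2 * sj - L) = 0 := by linear_combination Ej - Ej'
    rcases mul_eq_zero.mp h with h | h
    · linarith
    · linarith
  subst hsi hsj
  have hRi : Ri = L^2/4 + A^2 := by linarith
  have hRj : Rj = L^2/4 + B^2 := by linarith
  subst hRi hRj
  have dA : 2*A*(D - A) < -(L^2/4) - A^2 := by linarith
  have dB : 2*B*(D - B) < -(L^2/4) - B^2 := by linarith
  have hAB : A * B < 0 := by
    by_contra hc
    push_neg at hc
    have p1 : 0 ≤ ((A-B)^2 - (L^2/4 + A^2)) * ((A-B)^2 - (L^2/4 + B^2)) :=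
      mul_nonneg (by linarith) (by linarith)
    have p2 : 0 ≤ (2*(A*B) + L^2/4) * ((A^2 - 2*(A*B) - L^2/4) + (B^2 - 2*(A*B) - L^2/4)) :=
      mul_nonneg (by linarith) (by linarith)
    have p3 : 0 ≤ (A*B) * L^2 := mul_nonneg hc (sq_nonneg L)
    have p4 : 0 < (L*L) * (L*L) := mul_pos hL2 hL2
    have p5 : 0 ≤ (A*B) * (A*B) := mul_self_nonneg _
    linarith [p1, p2, p3, p4, p5]
  have hF : S^2 - L*S + T^2 - 2*A*T < 0 := by linarith
  have hFj : S^2 - L*S + T^2 - 2*B*T < 0 := by linarith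
  rcases lt_trichotomy A 0 with hA | hA | hA
  · -- A < 0, hence B > 0, A < D < B
    have hB : 0 < B := by
      by_contra hb
      push_neg at hb
      have : 0 ≤ A * B := mul_nn _ _ hA.le hb
      linarith
    have hDA : A < D := by
      by_contra h
      push_neg at h
      have : 0 ≤ (2*A) * (D - A) := mul_nn _ _ (by linarith) (by linarith)
      linarith [this, dA, hL2, sq_nonneg A]
    have hDB : D < B := by
      by_contra h
      push_neg at h
      have : 0 ≤ (2*B) * (D - B) := mul_nonneg (by linarith) (by linarith)
      linarith [this, dB, hL2, sq_nonneg B]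
    rcases le_or_gt 0 T with hT | hT
    · exact endgame L C D S T R A hL hk hk' hF
        (mul_nonneg (by linarith) hT) (mul_np _ _ hA.le hT)
    · exact endgame L C D S T R B hL hk hk' hFj
        (mul_nn _ _ (by linarith) hT.le)
        (mul_pn _ _ hB.le hT.le)
  · exfalso
    rw [hA] at dA
    linarith [dA, hL2]
  · -- A > 0, hence B < 0, B < D < A
    have hB : B < 0 := by
      by_contra hb
      push_neg at hb
      have : 0 ≤ A * B := mul_nonneg hA.le hb
      linarith
    have hDA : D < A := by
      by_contra h
      push_neg at h
      have : 0 ≤ (2*A) * (D - A) := mul_nonneg (by linarith) (by linarith)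
      linarith [this, dA, hL2, sq_nonneg A]
    have hDB : B < D := by
      by_contra h
      push_neg at h
      have : 0 ≤ (2*B) * (D - B) := mul_nn _ _ (by linarith) (by linarith)
      linarith [this, dB, hL2, sq_nonneg B]
    rcases le_or_gt 0 T with hT | hT
    · exact endgame L C D S T R B hL hk hk' hFj
        (mul_nonneg (by linarith) hT) (mul_np _ _ hB.le hT)
    · exact endgame L C D S T R A hL hk hk' hF
        (mul_nn _ _ (by linarith) hT.le)
        (mul_pn _ _ hA.le hT.le)

private lemma convlt (w0 w1 u0 u1 r : ℝ) (h : u0^2 + u1^2 < r) (hL : 0 < w0^2 + w1^2) :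
    (u0*w0 + u1*w1)^2 + (w0*u1 - w1*u0)^2 < r * (w0^2 + w1^2) := by
  have h2 := mul_lt_mul_of_pos_right h hL
  linarith [lag w0 w1 u0 u1]

private lemma convle (w0 w1 u0 u1 r : ℝ) (h : r ≤ u0^2 + u1^2) (hL : 0 < w0^2 + w1^2) :
    r * (w0^2 + w1^2) ≤ (u0*w0 + u1*w1)^2 + (w0*u1 - w1*u0)^2 := by
  have h2 := mul_le_mul_of_nonneg_right h hL.le
  linarith [lag w0 w1 u0 u1]

set_option maxHeartbeats 1000000 in

set_option maxHeartbeats 1000000 in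
/-- In a Minkowski arrangement of open disks, if a member `B_k` contains
both vertices `q, q'` of the digon `B_i ∩ B_j`, then it contains the whole digon. -/
theorem stmt_16 (ι : Type*) (x : ι → Plane) (ρ : ι → ℝ) (hρ : ∀ i, 0 < ρ i)
    (harr : ∀ i j, i ≠ j → max (ρ i) (ρ j) ≤ dist (x i) (x j))
    (i j k : ι) (hij : i ≠ j) (hik : i ≠ k) (hjk : j ≠ k)
    (hne : (ball (x i) (ρ i) ∩ ball (x j) (ρ j)).Nonempty)
    (hni : ¬ ball (x i) (ρ i) ⊆ ball (x j) (ρ j))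
    (hnj : ¬ ball (x j) (ρ j) ⊆ ball (x i) (ρ i))
    (q q' : Plane) (hqq' : q ≠ q')
    (hq : q ∈ sphere (x i) (ρ i) ∩ sphere (x j) (ρ j))
    (hq' : q' ∈ sphere (x i) (ρ i) ∩ sphere (x j) (ρ j))
    (hqk : q ∈ ball (x k) (ρ k)) (hq'k : q' ∈ ball (x k) (ρ k)) :
    ball (x i) (ρ i) ∩ ball (x j) (ρ j) ⊆ ball (x k) (ρ k) := by
  intro p hp
  obtain ⟨hpi, hpj⟩ := hp
  obtain ⟨hqi, hqj⟩ := hq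
  obtain ⟨hq'i, hq'j⟩ := hq'
  rw [mem_ball] at hpi hpj hqk hq'k ⊢
  rw [mem_sphere] at hqi hqj hq'i hq'j
  have sqd : ∀ z z' : Plane, dist z z' ^ 2 = (z 0 - z' 0)^2 + (z 1 - z' 1)^2 := by
    intro z z'
    rw [EuclideanSpace.dist_eq, Real.sq_sqrt (by positivity)]
    simp [Fin.sum_univ_two, Real.dist_eq, sq_abs]
  clear hne hni hnj
  -- raw squared facts
  have rqi : (q 0 - x i 0)^2 + (q 1 - x i 1)^2 = ρ i ^ 2 := by rw [← sqd, hqi]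
  have rqj : (q 0 - x j 0)^2 + (q 1 - x j 1)^2 = ρ j ^ 2 := by rw [← sqd, hqj]
  have rq'i : (q' 0 - x i 0)^2 + (q' 1 - x i 1)^2 = ρ i ^ 2 := by rw [← sqd, hq'i]
  have rq'j : (q' 0 - x j 0)^2 + (q' 1 - x j 1)^2 = ρ j ^ 2 := by rw [← sqd, hq'j]
  have rpi : (p 0 - x i 0)^2 + (p 1 - x i 1)^2 < ρ i ^ 2 := by
    rw [← sqd]; exact pow_lt_pow_left₀ hpi dist_nonneg (by norm_num)
  have rpj : (p 0 - x j 0)^2 + (p 1 - x j 1)^2 < ρ j ^ 2 := by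
    rw [← sqd]; exact pow_lt_pow_left₀ hpj dist_nonneg (by norm_num)
  have rqk : (q 0 - x k 0)^2 + (q 1 - x k 1)^2 < ρ k ^ 2 := by
    rw [← sqd]; exact pow_lt_pow_left₀ hqk dist_nonneg (by norm_num)
  have rq'k : (q' 0 - x k 0)^2 + (q' 1 - x k 1)^2 < ρ k ^ 2 := by
    rw [← sqd]; exact pow_lt_pow_left₀ hq'k dist_nonneg (by norm_num)
  have rik : ρ k ^ 2 ≤ (x k 0 - x i 0)^2 + (x k 1 - x i 1)^2 := by
    rw [← sqd]
    rw [dist_comm]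
    exact pow_le_pow_left₀ (hρ k).le ((le_max_right _ _).trans (harr i k hik)) 2
  have rjk : ρ k ^ 2 ≤ (x k 0 - x j 0)^2 + (x k 1 - x j 1)^2 := by
    rw [← sqd]
    rw [dist_comm]
    exact pow_le_pow_left₀ (hρ k).le ((le_max_right _ _).trans (harr j k hjk)) 2
  have riju : ρ i ^ 2 ≤ (x i 0 - x j 0)^2 + (x i 1 - x j 1)^2 := by
    rw [← sqd]
    exact pow_le_pow_left₀ (hρ i).le ((le_max_left _ _).trans (harr i j hij)) 2
  have rijv : ρ j ^ 2 ≤ (x i 0 - x j 0)^2 + (x i 1 - x j 1)^2 := by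
    rw [← sqd]
    exact pow_le_pow_left₀ (hρ j).le ((le_max_right _ _).trans (harr i j hij)) 2
  have hL : 0 < ((q' 0 - q 0)^2 + (q' 1 - q 1)^2) := by
    have h := dist_pos.mpr hqq'
    have h2 : 0 < dist q q' ^ 2 := pow_pos h 2
    rw [sqd] at h2
    linarith [h2]
  -- frame facts
  have Ei : ((x i 0 - q 0)*(q' 0 - q 0) + (x i 1 - q 1)*(q' 1 - q 1))^2 + ((q' 0 - q 0)*(x i 1 - q 1) - (q' 1 - q 1)*(x i 0 - q 0))^2 = ρ i ^ 2 * ((q' 0 - q 0)^2 + (q' 1 - q 1)^2) := by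
    linear_combination ((q' 0 - q 0)^2 + (q' 1 - q 1)^2) * rqi
  have Ei' : (((x i 0 - q 0)*(q' 0 - q 0) + (x i 1 - q 1)*(q' 1 - q 1)) - ((q' 0 - q 0)^2 + (q' 1 - q 1)^2))^2 + ((q' 0 - q 0)*(x i 1 - q 1) - (q' 1 - q 1)*(x i 0 - q 0))^2 = ρ i ^ 2 * ((q' 0 - q 0)^2 + (q' 1 - q 1)^2) := by
    linear_combination ((q' 0 - q 0)^2 + (q' 1 - q 1)^2) * rq'i
  have Ej : ((x j 0 - q 0)*(q' 0 - q 0) + (x j 1 - q 1)*(q' 1 - q 1))^2 + ((q' 0 - q 0)*(x j 1 - q 1) - (q' 1 - q 1)*(x j 0 - q 0))^2 = ρ j ^ 2 * ((q' 0 - q 0)^2 + (q' 1 - q 1)^2) := by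
    linear_combination ((q' 0 - q 0)^2 + (q' 1 - q 1)^2) * rqj
  have Ej' : (((x j 0 - q 0)*(q' 0 - q 0) + (x j 1 - q 1)*(q' 1 - q 1)) - ((q' 0 - q 0)^2 + (q' 1 - q 1)^2))^2 + ((q' 0 - q 0)*(x j 1 - q 1) - (q' 1 - q 1)*(x j 0 - q 0))^2 = ρ j ^ 2 * ((q' 0 - q 0)^2 + (q' 1 - q 1)^2) := by
    linear_combination ((q' 0 - q 0)^2 + (q' 1 - q 1)^2) * rq'j
  have fij1 : ρ i ^ 2 * ((q' 0 - q 0)^2 + (q' 1 - q 1)^2) ≤ (((x i 0 - q 0)*(q' 0 - q 0) + (x i 1 - q 1)*(q' 1 - q 1)) - ((x j 0 - q 0)*(q' 0 - q 0) + (x j 1 - q 1)*(q' 1 - q 1)))^2 + (((q' 0 - q 0)*(x i 1 - q 1) - (q' 1 - q 1)*(x i 0 - q 0)) - ((q' 0 - q 0)*(x j 1 - q 1) - (q' 1 - q 1)*(x j 0 - q 0)))^2 := by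
    have h := convle (q' 0 - q 0) (q' 1 - q 1) (x i 0 - x j 0) (x i 1 - x j 1) (ρ i ^ 2) riju hL
    linarith [h]
  have fij2 : ρ j ^ 2 * ((q' 0 - q 0)^2 + (q' 1 - q 1)^2) ≤ (((x i 0 - q 0)*(q' 0 - q 0) + (x i 1 - q 1)*(q' 1 - q 1)) - ((x j 0 - q 0)*(q' 0 - q 0) + (x j 1 - q 1)*(q' 1 - q 1)))^2 + (((q' 0 - q 0)*(x i 1 - q 1) - (q' 1 - q 1)*(x i 0 - q 0)) - ((q' 0 - q 0)*(x j 1 - q 1) - (q' 1 - q 1)*(x j 0 - q 0)))^2 := by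
    have h := convle (q' 0 - q 0) (q' 1 - q 1) (x i 0 - x j 0) (x i 1 - x j 1) (ρ j ^ 2) rijv hL
    linarith [h]
  have fk : ((x k 0 - q 0)*(q' 0 - q 0) + (x k 1 - q 1)*(q' 1 - q 1))^2 + ((q' 0 - q 0)*(x k 1 - q 1) - (q' 1 - q 1)*(x k 0 - q 0))^2 < ρ k ^ 2 * ((q' 0 - q 0)^2 + (q' 1 - q 1)^2) := by
    have h := convlt (q' 0 - q 0) (q' 1 - q 1) (q 0 - x k 0) (q 1 - x k 1) (ρ k ^ 2) rqk hL
    linarith [h]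
  have fk' : (((x k 0 - q 0)*(q' 0 - q 0) + (x k 1 - q 1)*(q' 1 - q 1)) - ((q' 0 - q 0)^2 + (q' 1 - q 1)^2))^2 + ((q' 0 - q 0)*(x k 1 - q 1) - (q' 1 - q 1)*(x k 0 - q 0))^2 < ρ k ^ 2 * ((q' 0 - q 0)^2 + (q' 1 - q 1)^2) := by
    have h := convlt (q' 0 - q 0) (q' 1 - q 1) (q' 0 - x k 0) (q' 1 - x k 1) (ρ k ^ 2) rq'k hL
    linarith [h]
  have fik : ρ k ^ 2 * ((q' 0 - q 0)^2 + (q' 1 - q 1)^2) ≤ (((x k 0 - q 0)*(q' 0 - q 0) + (x k 1 - q 1)*(q' 1 - q 1)) - ((x i 0 - q 0)*(q' 0 - q 0) + (x i 1 - q 1)*(q' 1 - q 1)))^2 + (((q' 0 - q 0)*(x k 1 - q 1) - (q' 1 - q 1)*(x k 0 - q 0)) - ((q' 0 - q 0)*(x i 1 - q 1) - (q' 1 - q 1)*(x i 0 - q 0)))^2 := by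
    have h := convle (q' 0 - q 0) (q' 1 - q 1) (x k 0 - x i 0) (x k 1 - x i 1) (ρ k ^ 2) rik hL
    linarith [h]
  have fjk : ρ k ^ 2 * ((q' 0 - q 0)^2 + (q' 1 - q 1)^2) ≤ (((x k 0 - q 0)*(q' 0 - q 0) + (x k 1 - q 1)*(q' 1 - q 1)) - ((x j 0 - q 0)*(q' 0 - q 0) + (x j 1 - q 1)*(q' 1 - q 1)))^2 + (((q' 0 - q 0)*(x k 1 - q 1) - (q' 1 - q 1)*(x k 0 - q 0)) - ((q' 0 - q 0)*(x j 1 - q 1) - (q' 1 - q 1)*(x j 0 - q 0)))^2 := by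
    have h := convle (q' 0 - q 0) (q' 1 - q 1) (x k 0 - x j 0) (x k 1 - x j 1) (ρ k ^ 2) rjk hL
    linarith [h]
  have fpi : (((p 0 - q 0)*(q' 0 - q 0) + (p 1 - q 1)*(q' 1 - q 1)) - ((x i 0 - q 0)*(q' 0 - q 0) + (x i 1 - q 1)*(q' 1 - q 1)))^2 + (((q' 0 - q 0)*(p 1 - q 1) - (q' 1 - q 1)*(p 0 - q 0)) - ((q' 0 - q 0)*(x i 1 - q 1) - (q' 1 - q 1)*(x i 0 - q 0)))^2 < ρ i ^ 2 * ((q' 0 - q 0)^2 + (q' 1 - q 1)^2) := by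
    have h := convlt (q' 0 - q 0) (q' 1 - q 1) (p 0 - x i 0) (p 1 - x i 1) (ρ i ^ 2) rpi hL
    linarith [h]
  have fpj : (((p 0 - q 0)*(q' 0 - q 0) + (p 1 - q 1)*(q' 1 - q 1)) - ((x j 0 - q 0)*(q' 0 - q 0) + (x j 1 - q 1)*(q' 1 - q 1)))^2 + (((q' 0 - q 0)*(p 1 - q 1) - (q' 1 - q 1)*(p 0 - q 0)) - ((q' 0 - q 0)*(x j 1 - q 1) - (q' 1 - q 1)*(x j 0 - q 0)))^2 < ρ j ^ 2 * ((q' 0 - q 0)^2 + (q' 1 - q 1)^2) := by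
    have h := convlt (q' 0 - q 0) (q' 1 - q 1) (p 0 - x j 0) (p 1 - x j 1) (ρ j ^ 2) rpj hL
    linarith [h]
  have main := core ((q' 0 - q 0)^2 + (q' 1 - q 1)^2) ((x i 0 - q 0)*(q' 0 - q 0) + (x i 1 - q 1)*(q' 1 - q 1)) ((x j 0 - q 0)*(q' 0 - q 0) + (x j 1 - q 1)*(q' 1 - q 1)) ((q' 0 - q 0)*(x i 1 - q 1) - (q' 1 - q 1)*(x i 0 - q 0)) ((q' 0 - q 0)*(x j 1 - q 1) - (q' 1 - q 1)*(x j 0 - q 0)) ((x k 0 - q 0)*(q' 0 - q 0) + (x k 1 - q 1)*(q' 1 - q 1)) ((q' 0 - q 0)*(x k 1 - q 1) - (q' 1 - q 1)*(x k 0 - q 0)) ((p 0 - q 0)*(q' 0 - q 0) + (p 1 - q 1)*(q' 1 - q 1)) ((q' 0 - q 0)*(p 1 - q 1) - (q' 1 - q 1)*(p 0 - q 0))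
    (ρ i ^ 2 * ((q' 0 - q 0)^2 + (q' 1 - q 1)^2)) (ρ j ^ 2 * ((q' 0 - q 0)^2 + (q' 1 - q 1)^2)) (ρ k ^ 2 * ((q' 0 - q 0)^2 + (q' 1 - q 1)^2)) hL Ei Ei' Ej Ej'
    fij1 fij2 fk fk' fik fjk fpi fpj
  have goal2 : (p 0 - x k 0)^2 + (p 1 - x k 1)^2 < ρ k ^ 2 := by
    by_contra h
    push_neg at h
    have h2 := mul_le_mul_of_nonneg_right h hL.le
    linarith [lag (q' 0 - q 0) (q' 1 - q 1) (p 0 - x k 0) (p 1 - x k 1), h2, main]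
  have := (sqd p (x k)) ▸ goal2
  exact lt_of_pow_lt_pow_left₀ 2 (hρ k).le this


end
end

section
/- Let F be a Minkowski arrangement of open circular disks in ℝ², i.e., a family {B_i = x_i + ρ_i int(B²)} with |x_i − x_j| ≥ max{ρ_i, ρ_j} for all i ≠ j. Let D = B_1 ∩ B_2 be a free digon with vertex q. Then the convex angular region bounded by the two closed half-lines starting at q and passing through x_1 and x_2, respectively, does not contain the center x_3 of any member B_3 of F different from B_1 and B_2 that satisfies q ∈ bd(B_3). -/
open Real Metric Set

noncomputable section

local notation "⟪" x ", " y "⟫" => @inner ℝ _ _ x y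

private lemma key_scalar (P Q a s t : ℝ) (hP : 0 < P) (hQ : 0 < Q)
    (hs : 0 ≤ s) (ht : 0 ≤ t) (hst : s + t ≤ 1)
    (ha : -(P*Q) < a)
    (hC2 : P^2 ≤ (s-1)^2*P^2 + 2*((s-1)*t)*a + t^2*Q^2)
    (hC4 : Q^2 ≤ s^2*P^2 + 2*(s*(t-1))*a + (t-1)^2*Q^2)
    (hnz : 0 < s ∨ 0 < t) : False := by
  have hs1 : s ≤ 1 := by linarith
  have ht1 : t ≤ 1 := by linarith
  have hε : 0 < a + P*Q := by linarith
  rcases hs.eq_or_lt with hs0 | hspos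
  · -- s = 0
    rcases ht.eq_or_lt with ht0 | htpos
    · rcases hnz with h | h <;> linarith
    · subst hs0
      nlinarith [hC4, mul_pos (mul_pos htpos (by linarith : (0:ℝ) < 2 - t)) (mul_pos hQ hQ)]
  rcases ht.eq_or_lt with ht0 | htpos
  · subst ht0
    nlinarith [hC2, mul_pos (mul_pos hspos (by linarith : (0:ℝ) < 2 - s)) (mul_pos hP hP)]
  -- main case s > 0, t > 0
  have hd1 : s*P ≤ t*Q := by
    by_contra h
    push_neg at h
    nlinarith [hC2, mul_pos (by linarith : (0:ℝ) < s*P - t*Q)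
        (by nlinarith [mul_pos hP (by linarith : (0:ℝ) < 2 - s), mul_nonneg ht hQ.le] :
          (0:ℝ) < 2*P - (s*P - t*Q)),
      mul_nonneg (mul_nonneg (by linarith : (0:ℝ) ≤ 1 - s) ht) hε.le]
  have hd2 : t*Q ≤ s*P := by
    by_contra h
    push_neg at h
    nlinarith [hC4, mul_pos (by linarith : (0:ℝ) < t*Q - s*P)
        (by nlinarith [mul_pos hQ (by linarith : (0:ℝ) < 2 - t), mul_nonneg hs hP.le] :
          (0:ℝ) < 2*Q - (t*Q - s*P)),
      mul_nonneg (mul_nonneg (by linarith : (0:ℝ) ≤ 1 - t) hs) hε.le]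
  have hd0 : s*P = t*Q := le_antisymm hd1 hd2
  have q1 : s*P*(s*P) = s*P*(t*Q) := by rw [hd0]
  have q2 : t*Q*(t*Q) = t*Q*(s*P) := by rw [hd0]
  have q3 : s*(P*P) = t*(P*Q) := by linear_combination P * hd0
  have hsta : 0 < s*P^2 + t*a := by nlinarith [mul_pos htpos hε]
  nlinarith [hC2, q1, q2, q3, mul_pos (by linarith : (0:ℝ) < 1 - s) hsta]

private lemma st_le_one (s t P1 P2 n : ℝ) (hs : 0 ≤ s) (ht : 0 ≤ t) (hn : 0 < n)
    (h1 : n < 2*P1) (h2 : n < 2*P2) (h3 : 2*(s*P1 + t*P2) ≤ n) : s + t ≤ 1 := by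
  nlinarith [mul_nonneg hs (by linarith : (0:ℝ) ≤ 2*P1 - n),
    mul_nonneg ht (by linarith : (0:ℝ) ≤ 2*P2 - n)]

/-- In a Minkowski arrangement of open disks, if `D = B_i ∩ B_j` is a free
digon with vertex `q`, then the convex angular region bounded by the two closed half-lines
from `q` through `x_i` and `x_j` contains the center of no member of the arrangement,
other than `B_i` and `B_j`, having `q` on its boundary. -/
theorem stmt_17 (ι : Type*) (x : ι → Plane) (ρ : ι → ℝ) (hρ : ∀ i, 0 < ρ i)
    (harr : ∀ i j, i ≠ j → max (ρ i) (ρ j) ≤ dist (x i) (x j))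
    (i j : ι) (hij : i ≠ j)
    (hne : (ball (x i) (ρ i) ∩ ball (x j) (ρ j)).Nonempty)
    (hfree : ∀ k, k ≠ i → k ≠ j →
      ¬ (ball (x i) (ρ i) ∩ ball (x j) (ρ j) ⊆ ball (x k) (ρ k)))
    (q : Plane) (hqi : q ∈ sphere (x i) (ρ i)) (hqj : q ∈ sphere (x j) (ρ j)) :
    ∀ k, k ≠ i → k ≠ j → q ∈ sphere (x k) (ρ k) →
      x k ∉ {p : Plane | ∃ s t : ℝ, 0 ≤ s ∧ 0 ≤ t ∧
        p = q + s • (x i - q) + t • (x j - q)} := by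
  intro k hki hkj hqk hmem
  obtain ⟨s, t, hs, ht, hxk⟩ := hmem
  set u : Plane := x i - q with hu
  set v : Plane := x j - q with hv
  have hxi : x i = q + u := by rw [hu]; abel
  have hxj : x j = q + v := by rw [hv]; abel
  have hPu : ‖u‖ = ρ i := by
    rw [mem_sphere_iff_norm] at hqi
    rw [hu, ← norm_neg, neg_sub]; exact hqi
  have hQv : ‖v‖ = ρ j := by
    rw [mem_sphere_iff_norm] at hqj
    rw [hv, ← norm_neg, neg_sub]; exact hqj
  have hρk : ρ k = ‖s • u + t • v‖ := by
    rw [mem_sphere_iff_norm] at hqk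
    rw [← hqk, ← norm_neg, neg_sub, hxk]; congr 1; abel
  -- norm expansion helper
  have expand : ∀ α β : ℝ, ‖α • u + β • v‖^2
      = α^2*(ρ i)^2 + 2*(α*β)*⟪u, v⟫ + β^2*(ρ j)^2 := by
    intro α β
    rw [norm_add_sq_real, real_inner_smul_left, real_inner_smul_right, norm_smul, norm_smul,
      mul_pow, mul_pow, Real.norm_eq_abs, Real.norm_eq_abs, sq_abs, sq_abs, hPu, hQv]
    ring
  -- Minkowski inequalities, squared
  have hdki : x k - x i = (s-1) • u + t • v := by
    rw [hxk, hxi]; module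
  have hdkj : x k - x j = s • u + (t-1) • v := by
    rw [hxk, hxj]; module
  have hC2 : (ρ i)^2 ≤ (s-1)^2*(ρ i)^2 + 2*((s-1)*t)*⟪u, v⟫ + t^2*(ρ j)^2 := by
    have h := le_trans (le_max_right (ρ k) (ρ i)) (harr k i hki)
    have h2 := pow_le_pow_left₀ (hρ i).le h 2
    rwa [dist_eq_norm, hdki, expand] at h2
  have hC4 : (ρ j)^2 ≤ s^2*(ρ i)^2 + 2*(s*(t-1))*⟪u, v⟫ + (t-1)^2*(ρ j)^2 := by
    have h := le_trans (le_max_right (ρ k) (ρ j)) (harr k j hkj)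
    have h2 := pow_le_pow_left₀ (hρ j).le h 2
    rwa [dist_eq_norm, hdkj, expand] at h2
  -- freeness witness
  obtain ⟨p, ⟨hpi, hpj⟩, hpk⟩ := not_subset.mp (hfree k hki hkj)
  rw [mem_ball] at hpi hpj
  rw [mem_ball, not_lt] at hpk
  set z : Plane := p - q with hz
  have hzi : p - x i = z - u := by rw [hz, hxi]; abel
  have hzj : p - x j = z - v := by rw [hz, hxj]; abel
  have hzk : p - x k = z - (s • u + t • v) := by rw [hz, hxk]; abel
  have h1 : ‖z‖^2 < 2*⟪z, u⟫ := by
    have e : ‖z - u‖ < ‖u‖ := by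
      rw [← hzi, ← dist_eq_norm, hPu]; exact hpi
    have e2 : ‖z - u‖^2 < ‖u‖^2 := pow_lt_pow_left₀ e (norm_nonneg _) two_ne_zero
    rw [norm_sub_sq_real] at e2; linarith
  have h2 : ‖z‖^2 < 2*⟪z, v⟫ := by
    have e : ‖z - v‖ < ‖v‖ := by
      rw [← hzj, ← dist_eq_norm, hQv]; exact hpj
    have e2 : ‖z - v‖^2 < ‖v‖^2 := pow_lt_pow_left₀ e (norm_nonneg _) two_ne_zero
    rw [norm_sub_sq_real] at e2; linarith
  have h3 : 2*(s*⟪z, u⟫ + t*⟪z, v⟫) ≤ ‖z‖^2 := by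
    have e : ‖s • u + t • v‖ ≤ ‖z - (s • u + t • v)‖ := by
      rw [← hzk, ← dist_eq_norm, ← hρk]; exact hpk
    have e2 : ‖s • u + t • v‖^2 ≤ ‖z - (s • u + t • v)‖^2 :=
      pow_le_pow_left₀ (norm_nonneg _) e 2
    rw [norm_sub_sq_real, inner_add_right, real_inner_smul_right, real_inner_smul_right] at e2
    linarith
  have hn : 0 < ‖z‖^2 := by
    rcases eq_or_ne z 0 with h | h
    · rw [h] at h1; simp at h1
    · exact pow_pos (norm_pos_iff.mpr h) 2
  -- s + t ≤ 1
  have hst : s + t ≤ 1 := st_le_one s t ⟪z, u⟫ ⟪z, v⟫ (‖z‖^2) hs ht hn h1 h2 h3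
  -- a > -(ρ i * ρ j)
  have ha : -(ρ i * ρ j) < ⟪u, v⟫ := by
    have htri : dist (x i) (x j) < ρ i + ρ j :=
      lt_of_le_of_lt (dist_triangle (x i) p (x j)) (by rw [dist_comm (x i) p]; linarith)
    have huv : x i - x j = u - v := by rw [hu, hv]; abel
    rw [dist_eq_norm, huv] at htri
    have e2 : ‖u - v‖^2 < (ρ i + ρ j)^2 := pow_lt_pow_left₀ htri (norm_nonneg _) two_ne_zero
    rw [norm_sub_sq_real, hPu, hQv] at e2
    nlinarith [e2]
  -- not both zero
  have hnz : 0 < s ∨ 0 < t := by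
    by_contra h
    push_neg at h
    have hs0 : s = 0 := le_antisymm h.1 hs
    have ht0 : t = 0 := le_antisymm h.2 ht
    rw [hs0, ht0] at hρk
    simp at hρk
    linarith [hρ k]
  exact key_scalar (ρ i) (ρ j) ⟪u, v⟫ s t (hρ i) (hρ j) hs ht hst ha hC2 hC4 hnz

end
end
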